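/- arXiv:2508.07963 — 9 statements merged into one kernel-verified Lean document; each statement's English description precedes it below -/
import Mathlib

section
/- Let S be a finite set, let c : S → ℕ be a family of natural numbers with C := ∑_{s∈S} c_s > 0, and let p : S → ℝ satisfy p_s ≥ 0 for all s and ∑_{s∈S} p_s ≤ 1. Then ∏_{s∈S} p_s^{c_s} ≤ ∏_{s∈S} (c_s/C)^{c_s}, where 0^0 is interpreted as 1. -/
/-- Among all sub-probability vectors `p` on a finite set `S`,
the product `∏ s, p s ^ c s` (with `0 ^ 0 = 1`) is maximized by the empirical
frequencies `p s = c s / C`, where `C = ∑ s, c s > 0`. -/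
theorem likelihood_le_empirical {α : Type*} (S : Finset α) (c : α → ℕ) (p : α → ℝ)
    (hC : 0 < ∑ s ∈ S, c s)
    (hp : ∀ s ∈ S, 0 ≤ p s)
    (hsum : ∑ s ∈ S, p s ≤ 1) :
    ∏ s ∈ S, p s ^ c s ≤ ∏ s ∈ S, ((c s : ℝ) / ((∑ t ∈ S, c t : ℕ) : ℝ)) ^ c s := by
  set C : ℝ := ((∑ t ∈ S, c t : ℕ) : ℝ) with hCdef
  have hCpos : (0:ℝ) < C := by rw [hCdef]; exact_mod_cast hC
  set T := S.filter (fun s => c s ≠ 0) with hT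
  have hTsub : T ⊆ S := Finset.filter_subset _ _
  have hcT : ∀ s ∈ T, c s ≠ 0 := fun s hs => (Finset.mem_filter.mp hs).2
  set w : α → ℝ := fun s => (c s : ℝ) / C with hwdef
  have hw0 : ∀ s ∈ T, 0 ≤ w s := fun s _ => div_nonneg (by positivity) hCpos.le
  have hwpos : ∀ s ∈ T, 0 < w s := fun s hs =>
    div_pos (by exact_mod_cast Nat.pos_of_ne_zero (hcT s hs)) hCpos
  -- reduce both products to T
  have hL : ∏ s ∈ S, p s ^ c s = ∏ s ∈ T, p s ^ c s := by
    refine (Finset.prod_subset hTsub fun x hx hxT => ?_).symm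
    have : c x = 0 := by
      by_contra h
      exact hxT (Finset.mem_filter.mpr ⟨hx, h⟩)
    simp [this]
  have hR : ∏ s ∈ S, w s ^ c s = ∏ s ∈ T, w s ^ c s := by
    refine (Finset.prod_subset hTsub fun x hx hxT => ?_).symm
    have : c x = 0 := by
      by_contra h
      exact hxT (Finset.mem_filter.mpr ⟨hx, h⟩)
    simp [this]
  rw [hL, hR]
  -- weights sum to 1 on T
  have hcsum : ∑ s ∈ T, (c s : ℝ) = C := by
    rw [hCdef]
    push_cast
    exact_mod_cast Finset.sum_subset hTsub fun x hx hxT => by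
      by_contra h
      exact hxT (Finset.mem_filter.mpr ⟨hx, fun hc => h (by simp [hc])⟩)
  have hwsum : ∑ s ∈ T, w s = 1 := by
    rw [hwdef]
    rw [← Finset.sum_div, hcsum, div_self hCpos.ne']
  set z : α → ℝ := fun s => p s / w s with hzdef
  have hz0 : ∀ s ∈ T, 0 ≤ z s := fun s hs =>
    div_nonneg (hp s (hTsub hs)) (hw0 s hs)
  have hwz : ∀ s ∈ T, w s * z s = p s := fun s hs => by
    rw [hzdef, mul_comm]
    exact div_mul_cancel₀ (p s) (hwpos s hs).ne'
  have key : ∏ s ∈ T, z s ^ w s ≤ ∑ s ∈ T, w s * z s :=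
    Real.geom_mean_le_arith_mean_weighted T w z hw0 hwsum hz0
  have hsum' : ∑ s ∈ T, w s * z s ≤ 1 := by
    rw [Finset.sum_congr rfl hwz]
    calc ∑ s ∈ T, p s ≤ ∑ s ∈ S, p s := Finset.sum_le_sum_of_subset_of_nonneg hTsub
          (fun x hx _ => hp x hx)
      _ ≤ 1 := hsum
  have hgm1 : ∏ s ∈ T, z s ^ w s ≤ 1 := key.trans hsum'
  have hgm0 : 0 ≤ ∏ s ∈ T, z s ^ w s :=
    Finset.prod_nonneg fun s hs => Real.rpow_nonneg (hz0 s hs) _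
  -- p^c = w^c * z^c, and ∏ z^c = (∏ z^w)^C ≤ 1
  have hsplit : ∏ s ∈ T, p s ^ c s = (∏ s ∈ T, w s ^ c s) * ∏ s ∈ T, z s ^ c s := by
    rw [← Finset.prod_mul_distrib]
    refine Finset.prod_congr rfl fun s hs => ?_
    rw [← mul_pow, hwz s hs]
  have hzc : ∏ s ∈ T, z s ^ c s = (∏ s ∈ T, z s ^ w s) ^ C := by
    rw [← Real.finset_prod_rpow T (fun s => z s ^ w s)
        (fun s hs => Real.rpow_nonneg (hz0 s hs) _) C]
    refine Finset.prod_congr rfl fun s hs => ?_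
    rw [← Real.rpow_natCast (z s) (c s), ← Real.rpow_mul (hz0 s hs)]
    congr 1
    rw [hwdef]
    field_simp
  have hzc1 : ∏ s ∈ T, z s ^ c s ≤ 1 := by
    rw [hzc]
    calc (∏ s ∈ T, z s ^ w s) ^ C ≤ 1 ^ C :=
          Real.rpow_le_rpow hgm0 hgm1 hCpos.le
      _ = 1 := Real.one_rpow C
  have hzc0 : 0 ≤ ∏ s ∈ T, z s ^ c s := by
    rw [hzc]; positivity
  calc ∏ s ∈ T, p s ^ c s = (∏ s ∈ T, w s ^ c s) * ∏ s ∈ T, z s ^ c s := hsplit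
    _ ≤ (∏ s ∈ T, w s ^ c s) * 1 := by
        refine mul_le_mul_of_nonneg_left hzc1 ?_
        exact Finset.prod_nonneg fun s hs => pow_nonneg (hw0 s hs) _
    _ = ∏ s ∈ T, w s ^ c s := mul_one _
end

section
/- Let S be a finite set, let c : S → ℕ with C := ∑_{s∈S} c_s > 0, and let p : S → ℝ satisfy p_s ≥ 0 for all s and ∑_{s∈S} p_s ≤ 1. Then ∏_{s∈S} p_s^{c_s} = ∏_{s∈S} (c_s/C)^{c_s} (with 0^0 = 1) if and only if p_s = c_s/C for every s ∈ S. -/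
/-!
With weights `q s = c s / C`, weighted AM-GM applied to the ratios `p s / q s` gives
`∏ (p s / q s) ^ q s ≤ ∑ q s * (p s / q s) ≤ ∑ p s ≤ 1`, and the left-hand side is the `C`-th
root of `∏ p s ^ c s / ∏ q s ^ c s`. Equal likelihoods therefore force equality in AM-GM, so
`p s / q s = 1` wherever `q s ≠ 0`, and equality in the middle step forces `p s = 0` wherever
`q s = 0`.
-/

open Finset Real

section

variable {α : Type*} {S : Finset α}

theorem mul_div_le_of_nonneg {p w : ℝ} (hp : 0 ≤ p) : w * (p / w) ≤ p := by
  rcases eq_or_ne w 0 with hw | hw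
  · simpa [hw] using hp
  · rw [mul_div_cancel₀ p hw]

theorem eq_of_one_le_prod_div_rpow {w p : α → ℝ} (hw : ∀ s ∈ S, 0 ≤ w s)
    (hw1 : ∑ s ∈ S, w s = 1) (hp : ∀ s ∈ S, 0 ≤ p s) (hp1 : ∑ s ∈ S, p s ≤ 1)
    (h : 1 ≤ ∏ s ∈ S, (p s / w s) ^ w s) : ∀ s ∈ S, p s = w s := by
  have hz : ∀ s ∈ S, 0 ≤ p s / w s := fun s hs => div_nonneg (hp s hs) (hw s hs)
  have hterm : ∀ s ∈ S, w s * (p s / w s) ≤ p s := fun s hs => mul_div_le_of_nonneg (hp s hs)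
  have hgm := geom_mean_le_arith_mean_weighted S w (fun s => p s / w s) hw hw1 hz
  have ham : ∑ s ∈ S, w s * (p s / w s) ≤ ∑ s ∈ S, p s := sum_le_sum hterm
  have heq : ∏ s ∈ S, (p s / w s) ^ w s = ∑ s ∈ S, w s * (p s / w s) := by linarith
  have ham_eq : ∑ s ∈ S, w s * (p s / w s) = ∑ s ∈ S, p s := by linarith
  have hmean : ∑ s ∈ S, w s * (p s / w s) = 1 := by linarith
  intro s hs
  rcases eq_or_ne (w s) 0 with hw0 | hw0
  · rw [hw0]
    simpa [hw0] using ((sum_eq_sum_iff_of_le hterm).mp ham_eq s hs).symm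
  · have := (geom_mean_eq_arith_mean_weighted_iff_of_nonneg' S w _ hw hw1 hz).mp heq s hs hw0
    exact (div_eq_one_iff_eq hw0).mp (this.trans hmean)

theorem prod_rpow_div_eq_rpow_prod_pow {z : α → ℝ} (hz : ∀ s ∈ S, 0 ≤ z s) (c : α → ℕ)
    (C : ℝ) : ∏ s ∈ S, z s ^ ((c s : ℝ) / C) = (∏ s ∈ S, z s ^ c s) ^ C⁻¹ := by
  rw [← finsetProd_rpow S _ (fun s hs => pow_nonneg (hz s hs) _)]
  refine prod_congr rfl fun s hs => ?_
  rw [div_eq_mul_inv, rpow_mul (hz s hs), rpow_natCast]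

end

/-- The product `∏ s, p s ^ c s` (with `0 ^ 0 = 1`) over a
sub-probability vector `p` equals the maximum value `∏ s, (c s / C) ^ c s`
(where `C = ∑ s, c s > 0`) if and only if `p s = c s / C` for every `s ∈ S`. -/
theorem likelihood_eq_empirical_iff {α : Type*} (S : Finset α) (c : α → ℕ) (p : α → ℝ)
    (hC : 0 < ∑ s ∈ S, c s)
    (hp : ∀ s ∈ S, 0 ≤ p s)
    (hsum : ∑ s ∈ S, p s ≤ 1) :
    (∏ s ∈ S, p s ^ c s = ∏ s ∈ S, ((c s : ℝ) / ((∑ t ∈ S, c t : ℕ) : ℝ)) ^ c s) ↔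
      ∀ s ∈ S, p s = (c s : ℝ) / ((∑ t ∈ S, c t : ℕ) : ℝ) := by
  set C : ℝ := ((∑ t ∈ S, c t : ℕ) : ℝ)
  have hC0 : C ≠ 0 := by positivity
  set q : α → ℝ := fun s => (c s : ℝ) / C
  refine ⟨fun h => eq_of_one_le_prod_div_rpow (fun s _ => by positivity) ?_ hp hsum ?_,
    fun h => prod_congr rfl fun s hs => by rw [h s hs]⟩
  · rw [← sum_div, ← Nat.cast_sum, div_self hC0]
  · have hq_pow : ∏ s ∈ S, q s ^ c s ≠ 0 := prod_ne_zero_iff.mpr fun s _ => by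
      rcases eq_or_ne (c s) 0 with h0 | h0
      · simp [h0]
      · exact pow_ne_zero _ (div_ne_zero (Nat.cast_ne_zero.mpr h0) hC0)
    rw [prod_rpow_div_eq_rpow_prod_pow (fun s hs => div_nonneg (hp s hs) (by positivity)),
      prod_congr rfl fun s _ => div_pow (p s) (q s) (c s), prod_div_distrib, h,
      div_self hq_pow, one_rpow]
end

section
/- For every closed finite trace π over U and every finite-state Markov chain M over U, L(M,π) ≤ L(M_π,π). That is, the chain M_π induced by π has maximal likelihood of generating π among all finite-state Markov chains over U. -/
open Finset

/-- A finite-state Markov chain over the state universe `U`: a finite nonempty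
set `S` of states, a transition probability matrix `P` supported in `S × S`
whose rows (indexed by states of `S`) sum to `1`, and an initial probability
distribution `μ` supported in `S`. -/
structure FinMC (U : Type*) where
  S : Finset U
  S_ne : S.Nonempty
  P : U → U → ℝ
  P_nonneg : ∀ a b, 0 ≤ P a b
  P_le_one : ∀ a b, P a b ≤ 1
  P_zero : ∀ a b, a ∉ S ∨ b ∉ S → P a b = 0
  P_row : ∀ a ∈ S, ∑ b ∈ S, P a b = 1
  μ : U → ℝ
  μ_nonneg : ∀ a, 0 ≤ μ a
  μ_zero : ∀ a, a ∉ S → μ a = 0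
  μ_sum : ∑ a ∈ S, μ a = 1

/-- The likelihood `L(M, π) = μ(r 0) · ∏_{i=1}^{n} P(r (i-1), r i)` that the
chain `M` generates the finite trace `π = r 0 ⋯ r n`. -/
def FinMC.lik {U : Type*} (M : FinMC U) (r : ℕ → U) (n : ℕ) : ℝ :=
  M.μ (r 0) * ∏ i ∈ range n, M.P (r i) (r (i + 1))

/-- `traceT r n a b` is the number of indices `0 ≤ i ≤ n - 1` with
`r i = a` and `r (i+1) = b`, i.e. the number of occurrences of the
transition `(a, b)` in the trace `r 0 ⋯ r n`. -/
def traceT {U : Type*} [DecidableEq U] (r : ℕ → U) (n : ℕ) (a b : U) : ℕ :=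
  ((range n).filter (fun i => r i = a ∧ r (i + 1) = b)).card

/-- The set of states `{r 0, …, r n}` occurring in the trace `r 0 ⋯ r n`. -/
def traceStates {U : Type*} [DecidableEq U] (r : ℕ → U) (n : ℕ) : Finset U :=
  (range (n + 1)).image r

/-- The empirical transition matrix of the trace `r 0 ⋯ r n`:
`P_π(a, b) = T_π(a, b) / ∑_{c} T_π(a, c)`. -/
noncomputable def traceP {U : Type*} [DecidableEq U] (r : ℕ → U) (n : ℕ) (a b : U) : ℝ :=
  (traceT r n a b : ℝ) / ∑ c ∈ traceStates r n, (traceT r n a c : ℝ)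

/-- The likelihood `L(M_π, π)` that the induced chain `M_π` generates `π`
(the initial distribution of `M_π` gives probability 1 to `r 0`). -/
noncomputable def traceLik {U : Type*} [DecidableEq U] (r : ℕ → U) (n : ℕ) : ℝ :=
  ∏ i ∈ range n, traceP r n (r i) (r (i + 1))

/-!
Grouping the factors of the likelihood by transition gives
`L(M, π) = μ(r₀) · ∏_{a,b} P(a,b) ^ T_π(a,b)`, and `μ(r₀) ≤ 1`. Row by row, the
product `∏_b p_b ^ t_b` over sub-probability vectors `p` is largest at the empirical
frequencies `p_b = t_b / ∑_c t_c`, which is the row `a` of `P_π` for `t = T_π(a, ·)`.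
That maximisation is weighted AM-GM with weights `w_b = t_b / ∑_c t_c` applied to `p_b / w_b`.
-/

lemma prod_pow_le_prod_div_sum_pow {ι : Type*} (s : Finset ι) (p : ι → ℝ) (t : ι → ℕ)
    (hp : ∀ b ∈ s, 0 ≤ p b) (hps : ∑ b ∈ s, p b ≤ 1) :
    ∏ b ∈ s, p b ^ t b ≤ ∏ b ∈ s, ((t b : ℝ) / ∑ c ∈ s, (t c : ℝ)) ^ t b := by
  set T : ℝ := ∑ c ∈ s, (t c : ℝ)
  rcases eq_or_ne T 0 with hT0 | hT0
  · have ht : ∀ b ∈ s, t b = 0 := fun b hb => by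
      exact_mod_cast (sum_eq_zero_iff_of_nonneg fun c _ => Nat.cast_nonneg (t c)).1 hT0 b hb
    exact (prod_congr rfl fun b hb => by rw [ht b hb, pow_zero, pow_zero]).le
  set w : ι → ℝ := fun b => (t b : ℝ) / T
  -- where `w b = 0`, `z b` is the junk value `p b / 0 = 0`, but it carries weight `0`
  set z : ι → ℝ := fun b => p b / w b
  have hz : ∀ b ∈ s, 0 ≤ z b := fun b hb => div_nonneg (hp b hb) (by positivity)
  have hw_sum : ∑ b ∈ s, w b = 1 := by rw [← sum_div, div_self hT0]
  have hwz : ∀ b ∈ s, w b * z b ≤ p b := fun b hb => by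
    rcases eq_or_ne (w b) 0 with hw | hw
    · rw [hw, zero_mul]; exact hp b hb
    · exact (mul_div_cancel₀ _ hw).le
  have h_split : ∀ b, p b ^ t b = w b ^ t b * z b ^ t b := fun b => by
    rcases eq_or_ne (t b) 0 with ht | ht
    · simp [ht]
    · have hw : w b ≠ 0 := div_ne_zero (Nat.cast_ne_zero.2 ht) hT0
      rw [← mul_pow, mul_div_cancel₀ _ hw]
  have h_geom : ∏ b ∈ s, z b ^ (w b : ℝ) ≤ 1 :=
    (Real.geom_mean_le_arith_mean_weighted s w z (fun b _ => by positivity) hw_sum hz).trans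
      ((sum_le_sum hwz).trans hps)
  have h_prod_z : ∏ b ∈ s, z b ^ t b ≤ 1 := by
    obtain ⟨N, hN⟩ : ∃ N : ℕ, (N : ℝ) = T := ⟨∑ c ∈ s, t c, by push_cast; rfl⟩
    calc ∏ b ∈ s, z b ^ t b = (∏ b ∈ s, z b ^ (w b : ℝ)) ^ N := by
          rw [← prod_pow]
          refine prod_congr rfl fun b hb => ?_
          rw [← Real.rpow_natCast (z b ^ w b), ← Real.rpow_mul (hz b hb), hN,
            div_mul_cancel₀ _ hT0, Real.rpow_natCast]
      _ ≤ 1 := pow_le_one₀ (prod_nonneg fun b hb => Real.rpow_nonneg (hz b hb) _) h_geom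
  calc ∏ b ∈ s, p b ^ t b = (∏ b ∈ s, w b ^ t b) * ∏ b ∈ s, z b ^ t b := by
        rw [← prod_mul_distrib]; exact prod_congr rfl fun b _ => h_split b
    _ ≤ ∏ b ∈ s, w b ^ t b :=
        mul_le_of_le_one_right (prod_nonneg fun b _ => by positivity) h_prod_z

lemma prod_transitions_eq_prod_pow_traceT {U M : Type*} [DecidableEq U] [CommMonoid M]
    (r : ℕ → U) (n : ℕ) (f : U → U → M) :
    ∏ i ∈ range n, f (r i) (r (i + 1)) =
      ∏ a ∈ traceStates r n, ∏ b ∈ traceStates r n, f a b ^ traceT r n a b := by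
  have h_maps : ∀ i ∈ range n, (r i, r (i + 1)) ∈ traceStates r n ×ˢ traceStates r n :=
    fun i hi => by
      rw [mem_range] at hi
      exact mem_product.2 ⟨mem_image_of_mem r (mem_range.2 (by omega)),
        mem_image_of_mem r (mem_range.2 (by omega))⟩
  rw [← prod_fiberwise_of_maps_to' h_maps (fun x => f x.1 x.2), prod_product]
  refine prod_congr rfl fun a _ => prod_congr rfl fun b _ => ?_
  rw [prod_const, traceT]
  simp only [Prod.ext_iff]

namespace FinMC

variable {U : Type*} (M : FinMC U)

lemma μ_le_one (a : U) : M.μ a ≤ 1 := by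
  by_cases ha : a ∈ M.S
  · exact M.μ_sum ▸ single_le_sum (fun b _ => M.μ_nonneg b) ha
  · rw [M.μ_zero a ha]; exact zero_le_one

lemma sum_P_le_one [DecidableEq U] (a : U) (s : Finset U) : ∑ b ∈ s, M.P a b ≤ 1 := by
  by_cases ha : a ∈ M.S
  · calc ∑ b ∈ s, M.P a b ≤ ∑ b ∈ s ∪ M.S, M.P a b :=
          sum_le_sum_of_subset_of_nonneg subset_union_left fun b _ _ => M.P_nonneg a b
      _ = ∑ b ∈ M.S, M.P a b :=
          (sum_subset subset_union_right fun b _ hb => M.P_zero a b (Or.inr hb)).symm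
      _ = 1 := M.P_row a ha
  · rw [sum_eq_zero fun b _ => M.P_zero a b (Or.inl ha)]; exact zero_le_one

end FinMC

theorem lik_le_traceLik_general {U : Type*} [DecidableEq U] (r : ℕ → U) (n : ℕ)
    (M : FinMC U) :
    M.lik r n ≤ traceLik r n := by
  set R := traceStates r n
  calc M.lik r n ≤ ∏ i ∈ range n, M.P (r i) (r (i + 1)) :=
        mul_le_of_le_one_left (prod_nonneg fun i _ => M.P_nonneg _ _) (M.μ_le_one _)
    _ = ∏ a ∈ R, ∏ b ∈ R, M.P a b ^ traceT r n a b :=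
        prod_transitions_eq_prod_pow_traceT r n M.P
    _ ≤ ∏ a ∈ R, ∏ b ∈ R, traceP r n a b ^ traceT r n a b :=
        prod_le_prod (fun a _ => prod_nonneg fun b _ => pow_nonneg (M.P_nonneg a b) _)
          fun a _ => prod_pow_le_prod_div_sum_pow R (M.P a) (traceT r n a)
            (fun b _ => M.P_nonneg a b) (M.sum_P_le_one a R)
    _ = traceLik r n := (prod_transitions_eq_prod_pow_traceT r n (traceP r n)).symm

/-- For every closed finite trace `π = r 0 ⋯ r n` and every
finite-state Markov chain `M` over `U`, `L(M, π) ≤ L(M_π, π)`: the chain `M_π`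
induced by `π` has maximal likelihood of generating `π`. -/
theorem lik_le_traceLik {U : Type*} [DecidableEq U] (r : ℕ → U) (n : ℕ)
    (hclosed : ∃ i < n, r i = r n) (M : FinMC U) :
    M.lik r n ≤ traceLik r n :=
  lik_le_traceLik_general r n M
end

section
/- Let π = r_0 ⋯ r_n be a finite trace over U. The mutual-reachability class B of the last state r_n in the trace graph G_π is a bottom SCC of G_π (every edge of G_π starting in B ends in B), and it is the unique bottom SCC: every SCC of G_π that is a bottom SCC equals B. -/
/-- The edge relation of the trace graph `G_π` of the finite trace
`π = r 0 ⋯ r n`: there is an edge `(a, b)` iff `a = r i` and `b = r (i+1)` for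
some `0 ≤ i ≤ n - 1`. -/
def traceEdge {U : Type*} (r : ℕ → U) (n : ℕ) (a b : U) : Prop :=
  ∃ i < n, r i = a ∧ r (i + 1) = b

/-- Reachability in the trace graph `G_π`: a (possibly empty) directed path of
edges from `a` to `b`. -/
def traceReach {U : Type*} (r : ℕ → U) (n : ℕ) : U → U → Prop :=
  Relation.ReflTransGen (traceEdge r n)

/-- The SCC (mutual-reachability class) of a vertex `u` in the trace graph. -/
def traceSCC {U : Type*} (r : ℕ → U) (n : ℕ) (u : U) : Set U :=
  {v | traceReach r n u v ∧ traceReach r n v u}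

/-- `u` is a vertex of the trace graph of `π = r 0 ⋯ r n`. -/
def traceVertex {U : Type*} (r : ℕ → U) (n : ℕ) (u : U) : Prop :=
  ∃ i ≤ n, r i = u

private lemma traceReach_last {U : Type*} (r : ℕ → U) (n : ℕ) :
    ∀ d i, i + d = n → traceReach r n (r i) (r n) := by
  intro d
  induction d with
  | zero => intro i h; simp at h; subst h; exact Relation.ReflTransGen.refl
  | succ d ih =>
    intro i h
    have hi : i < n := by omega
    exact Relation.ReflTransGen.head ⟨i, hi, rfl, rfl⟩ (ih (i + 1) (by omega))

/-- For any finite trace `π = r 0 ⋯ r n`, the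
mutual-reachability class `B` of the last state `r n` in the trace graph `G_π`
is a bottom SCC (every edge starting in `B` ends in `B`), and it is the unique
bottom SCC: every SCC of `G_π` (the SCC of any vertex) that is a bottom SCC
equals `B`. -/
theorem traceGraph_unique_BSCC {U : Type*} (r : ℕ → U) (n : ℕ) :
    (∀ a ∈ traceSCC r n (r n), ∀ b, traceEdge r n a b → b ∈ traceSCC r n (r n)) ∧
    (∀ u, traceVertex r n u →
      (∀ a ∈ traceSCC r n u, ∀ b, traceEdge r n a b → b ∈ traceSCC r n u) →
      traceSCC r n u = traceSCC r n (r n)) := by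
  constructor
  · rintro a ⟨hna, _⟩ b hab
    obtain ⟨i, hi, _, hb⟩ := id hab
    have hbn : traceReach r n b (r n) := by
      subst hb; exact traceReach_last r n (n - (i + 1)) (i + 1) (by omega)
    exact ⟨hna.trans (Relation.ReflTransGen.single hab), hbn⟩
  · rintro u ⟨i, hi, hu⟩ hclosed
    have hun : traceReach r n u (r n) := by
      subst hu; exact traceReach_last r n (n - i) i (by omega)
    -- r n ∈ traceSCC r n u
    have hmem : r n ∈ traceSCC r n u := by
      have : ∀ v, traceReach r n u v → v ∈ traceSCC r n u := by
        intro v hv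
        induction hv with
        | refl => exact ⟨Relation.ReflTransGen.refl, Relation.ReflTransGen.refl⟩
        | tail _ hbc ihb => exact hclosed _ ihb _ hbc
      exact this _ hun
    obtain ⟨hurn, hrnu⟩ := hmem
    ext v
    constructor
    · rintro ⟨huv, hvu⟩
      exact ⟨hrnu.trans huv, hvu.trans hurn⟩
    · rintro ⟨hnv, hvn⟩
      exact ⟨hurn.trans hnv, hvn.trans hrnu⟩
end

section
/- Let S be a finite nonempty set, κ a Markov kernel on S, and s₀ ∈ S. Then P_{s₀}-almost every trajectory ω : ℕ → S satisfies: there exist a set B ⊆ S that is a BSCC of the digraph of κ and an index N ∈ ℕ such that ω_n ∈ B for all n ≥ N and, for every b ∈ B, the set {n : ω_n = b} is infinite. -/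
/-!
Almost surely every step of the path is an edge. If `s → t` is an edge, then by the Markov
property at the successive visits to `s`, the probability of visiting `s` at least `k` times after
time `M` without ever visiting `t` after `M` is at most `(1 - κ s t) ^ k`; hence almost surely the
set of states visited infinitely often is closed under edges. Along a path that follows edges this
set is a BSCC, and since `S` is finite the path eventually stays in it.
-/

open MeasureTheory Filter

/-- The edge relation of the digraph of the Markov kernel `κ`: there is an
edge `(a, b)` whenever `κ a` assigns positive probability to `b`. -/
def kerEdge {S : Type*} (κ : S → PMF S) (a b : S) : Prop :=
  κ a b ≠ 0

/-- Reachability in the digraph of `κ`: a directed path of edges. -/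
def kerReach {S : Type*} (κ : S → PMF S) : S → S → Prop :=
  Relation.ReflTransGen (kerEdge κ)

/-- `B` is a BSCC of the digraph of `κ`: it is nonempty, any two of its states
are mutually reachable, it is closed under edges, and it is a full
mutual-reachability class. -/
def IsBSCC {S : Type*} (κ : S → PMF S) (B : Set S) : Prop :=
  B.Nonempty ∧
  (∀ a ∈ B, ∀ b ∈ B, kerReach κ a b) ∧
  (∀ a ∈ B, ∀ b, kerEdge κ a b → b ∈ B) ∧
  (∀ a ∈ B, ∀ b, kerReach κ a b → kerReach κ b a → b ∈ B)

namespace MarkovChainPath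

section Cylinders

variable {S : Type*}

def cyl (L : ℕ) (f : ℕ → S) : Set (ℕ → S) := {ω | ∀ i ≤ L, ω i = f i}

def trunc (L : ℕ) (ω : ℕ → S) : ℕ → S := fun i => ω (min i L)

def IsDeterminedUpTo (L : ℕ) (E : Set (ℕ → S)) : Prop :=
  ∀ ω ω', (∀ i ≤ L, ω i = ω' i) → ω ∈ E → ω' ∈ E

lemma trunc_apply_of_le {L i : ℕ} (ω : ℕ → S) (hi : i ≤ L) : trunc L ω i = ω i := by
  rw [trunc, min_eq_left hi]

lemma cyl_congr {L : ℕ} {f g : ℕ → S} (h : ∀ i ≤ L, f i = g i) : cyl L f = cyl L g := by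
  ext ω
  exact forall₂_congr fun i hi => by rw [h i hi]

lemma preimage_trunc_singleton {L : ℕ} {f : ℕ → S} (hf : f ∈ Set.range (trunc L)) :
    trunc L ⁻¹' {f} = cyl L f := by
  obtain ⟨g, rfl⟩ := hf
  rw [cyl_congr fun i hi => trunc_apply_of_le g hi]
  ext ω
  simp only [Set.mem_preimage, Set.mem_singleton_iff, funext_iff, trunc, cyl, Set.mem_ofPred_eq]
  refine ⟨fun h i hi => ?_, fun h i => h _ (min_le_right i L)⟩
  simpa [min_eq_left hi] using h i

lemma finite_range_trunc [Finite S] (L : ℕ) :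
    (Set.range (trunc L : (ℕ → S) → ℕ → S)).Finite :=
  (Set.finite_range fun (g : Fin (L + 1) → S) i => g ⟨min i L, by omega⟩).subset
    (by rintro _ ⟨ω, rfl⟩; exact ⟨fun j => ω j, rfl⟩)

lemma IsDeterminedUpTo.preimage_trunc {L : ℕ} {E : Set (ℕ → S)} (hE : IsDeterminedUpTo L E) :
    trunc L ⁻¹' E = E := by
  ext ω
  have h : ∀ i ≤ L, trunc L ω i = ω i := fun i hi => trunc_apply_of_le ω hi
  exact ⟨hE _ _ h, hE _ _ fun i hi => (h i hi).symm⟩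

lemma isDeterminedUpTo_setOf_apply_eq (L : ℕ) (a : S) :
    IsDeterminedUpTo L {ω : ℕ → S | ω L = a} :=
  fun _ _ h hω => (h L le_rfl).symm.trans hω

lemma cyl_succ_update (L : ℕ) (f : ℕ → S) (x : S) :
    cyl (L + 1) (Function.update f (L + 1) x) = cyl L f ∩ {ω | ω (L + 1) = x} := by
  ext ω
  simp only [cyl, Set.mem_inter_iff, Set.mem_ofPred_eq]
  constructor
  · intro h
    refine ⟨fun i hi => ?_, by rw [h (L + 1) le_rfl, Function.update_self]⟩
    rw [h i (by omega), Function.update_of_ne (by omega)]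
  · rintro ⟨h, hx⟩ i hi
    rcases Nat.lt_or_eq_of_le hi with hi | rfl
    · rw [Function.update_of_ne (by omega), h i (by omega)]
    · rw [Function.update_self, hx]

end Cylinders

section Measure

variable {S : Type*} [MeasurableSpace S]

lemma measurable_trunc (L : ℕ) : Measurable (trunc L : (ℕ → S) → ℕ → S) :=
  measurable_pi_lambda _ fun _ => measurable_pi_apply _

variable [Finite S] [MeasurableSingletonClass S] {L : ℕ} {E : Set (ℕ → S)}

lemma IsDeterminedUpTo.measurableSet (hE : IsDeterminedUpTo L E) : MeasurableSet E := by
  rw [← hE.preimage_trunc, ← Set.preimage_inter_range]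
  exact measurable_trunc L ((finite_range_trunc L).subset Set.inter_subset_right).measurableSet

lemma IsDeterminedUpTo.measure_eq_tsum (hE : IsDeterminedUpTo L E) (μ : Measure (ℕ → S)) :
    μ E = ∑' f : ↥(E ∩ Set.range (trunc L)), μ (cyl L f) := calc
  μ E = μ (trunc L ⁻¹' (E ∩ Set.range (trunc L))) := by
    rw [Set.preimage_inter_range, hE.preimage_trunc]
  _ = ∑' f : ↥(E ∩ Set.range (trunc L)), μ (trunc L ⁻¹' {↑f}) :=
    (tsum_measure_preimage_singleton
      ((finite_range_trunc L).subset Set.inter_subset_right).countable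
      fun f _ => measurable_trunc L (measurableSet_singleton f)).symm
  _ = _ := tsum_congr fun f => by rw [preimage_trunc_singleton f.2.2]

end Measure

def IsPathLaw {S : Type*} [DecidableEq S] [MeasurableSpace S] (κ : S → PMF S) (s₀ : S)
    (P : Measure (ℕ → S)) : Prop :=
  ∀ (k : ℕ) (f : ℕ → S), P (cyl k f) =
    (if f 0 = s₀ then 1 else 0) * ∏ i ∈ Finset.range k, κ (f i) (f (i + 1))

namespace IsPathLaw

variable {S : Type*} [DecidableEq S] [MeasurableSpace S]
  {κ : S → PMF S} {s₀ : S} {P : Measure (ℕ → S)}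

lemma measure_cyl_inter (hP : IsPathLaw κ s₀ P) (L : ℕ) (f : ℕ → S) (x : S) :
    P (cyl L f ∩ {ω | ω (L + 1) = x}) = P (cyl L f) * κ (f L) x := by
  have hf : ∀ i ≤ L, Function.update f (L + 1) x i = f i :=
    fun i hi => Function.update_of_ne (by omega) _ _
  rw [← cyl_succ_update, hP, hP, Finset.prod_range_succ, ← mul_assoc, hf 0 (Nat.zero_le L),
    hf L le_rfl, Function.update_self,
    Finset.prod_congr rfl fun i hi => by
      rw [hf i (Finset.mem_range.1 hi).le, hf (i + 1) (Finset.mem_range.1 hi)]]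

variable [Finite S] [MeasurableSingletonClass S] {L : ℕ} {E : Set (ℕ → S)} {s : S}

/-- The Markov property at time `L`. -/
lemma measure_inter_succ (hP : IsPathLaw κ s₀ P) (hE : IsDeterminedUpTo L E)
    (hEs : ∀ ω ∈ E, ω L = s) (x : S) :
    P (E ∩ {ω | ω (L + 1) = x}) = P E * κ s x := by
  have hx : MeasurableSet {ω : ℕ → S | ω (L + 1) = x} :=
    (measurableSet_singleton x).preimage (measurable_pi_apply (L + 1))
  rw [← Measure.restrict_apply' hx, hE.measure_eq_tsum, hE.measure_eq_tsum,
    ← ENNReal.tsum_mul_right]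
  refine tsum_congr fun f => ?_
  rw [Measure.restrict_apply' hx, hP.measure_cyl_inter, hEs f f.2.1]

lemma measure_inter_succ_ne [IsFiniteMeasure P] (hP : IsPathLaw κ s₀ P)
    (hE : IsDeterminedUpTo L E) (hEs : ∀ ω ∈ E, ω L = s) (t : S) :
    P (E ∩ {ω | ω (L + 1) ≠ t}) = P E * (1 - κ s t) := by
  have hdiff : E ∩ {ω | ω (L + 1) ≠ t} = E \ (E ∩ {ω | ω (L + 1) = t}) := by
    ext ω; simp
  have ht : MeasurableSet {ω : ℕ → S | ω (L + 1) = t} :=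
    (measurableSet_singleton t).preimage (measurable_pi_apply (L + 1))
  rw [hdiff, measure_sdiff Set.inter_subset_left (hE.measurableSet.inter ht).nullMeasurableSet
      (measure_ne_top _ _),
    hP.measure_inter_succ hE hEs, ENNReal.mul_sub fun _ _ => measure_ne_top P E, mul_one]

lemma ae_kerEdge (hP : IsPathLaw κ s₀ P) : ∀ᵐ ω ∂P, ∀ n, kerEdge κ (ω n) (ω (n + 1)) := by
  refine ae_all_iff.2 fun n => ae_iff.2 ?_
  have hnull : ∀ a b, κ a b = 0 → P ({ω | ω n = a} ∩ {ω | ω (n + 1) = b}) = 0 := fun a b hab => by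
    rw [hP.measure_inter_succ (isDeterminedUpTo_setOf_apply_eq n a) (fun _ h => h), hab, mul_zero]
  refine measure_mono_null (fun ω hω => ?_)
    (measure_iUnion_null fun a => measure_iUnion_null fun b => measure_iUnion_null (hnull a b))
  simp only [Set.mem_iUnion]
  exact ⟨ω n, ω (n + 1), not_not.1 hω, rfl, rfl⟩

end IsPathLaw

section Visits

variable {S : Type*} [DecidableEq S]

/-- The `k`-th visit to `s` after time `M` (counting from `0`) happens at time `L`, and `t` is
not visited during `(M, L]`. -/
def visitAvoiding (s t : S) (M k L : ℕ) : Set (ℕ → S) :=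
  {ω | Nat.count (fun n => M < n ∧ ω n = s) L = k ∧ M < L ∧ ω L = s ∧
    ∀ n ∈ Set.Ioc M L, ω n ≠ t}

lemma isDeterminedUpTo_visitAvoiding (s t : S) (M k L : ℕ) :
    IsDeterminedUpTo L (visitAvoiding s t M k L) := by
  rintro ω ω' h ⟨hcount, hML, hL, havoid⟩
  refine ⟨?_, hML, (h L le_rfl).symm.trans hL, fun n hn => h n hn.2 ▸ havoid n hn⟩
  rw [← hcount, Nat.count_eq_card_filter_range, Nat.count_eq_card_filter_range]
  congr 1
  exact Finset.filter_congr fun n hn => by rw [h n (Finset.mem_range.1 hn).le]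

lemma pairwise_disjoint_visitAvoiding (s t : S) (M k : ℕ) :
    Pairwise (Function.onFun Disjoint (visitAvoiding s t M k)) := by
  refine (pairwise_disjoint_on _).2 fun L L' hLL' => Set.disjoint_left.2 ?_
  rintro ω ⟨hcount, hML, hL, -⟩ ⟨hcount', -⟩
  exact (Nat.count_strict_mono ⟨hML, hL⟩ hLL').ne (hcount.trans hcount'.symm)

lemma iUnion_visitAvoiding_succ_subset (s t : S) (M k : ℕ) :
    ⋃ L, visitAvoiding s t M (k + 1) L ⊆
      ⋃ L, visitAvoiding s t M k L ∩ {ω | ω (L + 1) ≠ t} := by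
  refine Set.iUnion_subset fun L' ω ⟨hcount, _, _, havoid⟩ => ?_
  have hk : k < Nat.count (fun n => M < n ∧ ω n = s) L' := hcount ▸ k.lt_succ_self
  have hk' : ∀ hf : (Set.ofPred fun n => M < n ∧ ω n = s).Finite, k < hf.toFinset.card :=
    fun hf => hk.trans_le (Nat.count_le_card hf L')
  have hlt := Nat.nth_lt_of_lt_count hk
  obtain ⟨hM, hs⟩ := Nat.nth_mem k hk'
  exact Set.mem_iUnion.2 ⟨_, ⟨Nat.count_nth hk', hM, hs,
    fun n hn => havoid n ⟨hn.1, hn.2.trans hlt.le⟩⟩, havoid _ ⟨by omega, hlt⟩⟩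

lemma setOf_infinite_avoiding_subset_iUnion_visitAvoiding (s t : S) (M k : ℕ) :
    {ω : ℕ → S | {n | ω n = s}.Infinite ∧ ∀ n, M < n → ω n ≠ t} ⊆
      ⋃ L, visitAvoiding s t M k L := by
  rintro ω ⟨hinf, havoid⟩
  have hp : (Set.ofPred fun n => M < n ∧ ω n = s).Infinite :=
    (hinf.sdiff (Set.finite_Iic M)).mono fun n hn => ⟨not_le.1 hn.2, hn.1⟩
  obtain ⟨hM, hs⟩ := Nat.nth_mem_of_infinite hp k
  exact Set.mem_iUnion.2 ⟨_, Nat.count_nth_of_infinite hp k, hM, hs, fun n hn => havoid n hn.1⟩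

end Visits

namespace IsPathLaw

variable {S : Type*} [DecidableEq S] [MeasurableSpace S] [Finite S] [MeasurableSingletonClass S]
  {κ : S → PMF S} {s₀ : S} {P : Measure (ℕ → S)} [IsProbabilityMeasure P]

lemma measure_iUnion_visitAvoiding_le (hP : IsPathLaw κ s₀ P) (s t : S) (M k : ℕ) :
    P (⋃ L, visitAvoiding s t M k L) ≤ (1 - κ s t) ^ k := by
  induction k with
  | zero => simpa using prob_le_one
  | succ k ih => calc
    P (⋃ L, visitAvoiding s t M (k + 1) L)
        ≤ ∑' L, P (visitAvoiding s t M k L ∩ {ω | ω (L + 1) ≠ t}) :=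
      (measure_mono (iUnion_visitAvoiding_succ_subset s t M k)).trans (measure_iUnion_le _)
    _ = ∑' L, P (visitAvoiding s t M k L) * (1 - κ s t) := tsum_congr fun L =>
      hP.measure_inter_succ_ne (isDeterminedUpTo_visitAvoiding s t M k L)
        (fun _ hω => hω.2.2.1) t
    _ = P (⋃ L, visitAvoiding s t M k L) * (1 - κ s t) := by
      rw [ENNReal.tsum_mul_right, measure_iUnion (pairwise_disjoint_visitAvoiding s t M k)
        fun L => (isDeterminedUpTo_visitAvoiding s t M k L).measurableSet]
    _ ≤ (1 - κ s t) ^ (k + 1) := by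
      rw [pow_succ]
      gcongr

lemma measure_infinite_avoiding_eq_zero (hP : IsPathLaw κ s₀ P) {s t : S}
    (hst : kerEdge κ s t) (M : ℕ) :
    P {ω | {n | ω n = s}.Infinite ∧ ∀ n, M < n → ω n ≠ t} = 0 := by
  have hq : 1 - κ s t < 1 := ENNReal.sub_lt_self ENNReal.one_ne_top one_ne_zero hst
  refine le_antisymm (ge_of_tendsto' (ENNReal.tendsto_pow_atTop_nhds_zero_of_lt_one hq)
    fun k => ?_) bot_le
  exact (measure_mono (setOf_infinite_avoiding_subset_iUnion_visitAvoiding s t M k)).trans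
    (hP.measure_iUnion_visitAvoiding_le s t M k)

lemma ae_infinite_of_kerEdge (hP : IsPathLaw κ s₀ P) {s t : S} (hst : kerEdge κ s t) :
    ∀ᵐ ω ∂P, {n | ω n = s}.Infinite → {n | ω n = t}.Infinite := by
  refine ae_iff.2 (measure_mono_null (fun ω hω => ?_)
    (measure_iUnion_null fun M => hP.measure_infinite_avoiding_eq_zero hst M))
  obtain ⟨hs, ht⟩ := Classical.not_imp.1 hω
  obtain ⟨M, hM⟩ := (Set.not_infinite.1 ht).bddAbove
  exact Set.mem_iUnion.2 ⟨M, hs, fun n hn hnt => (hM hnt).not_gt hn⟩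

end IsPathLaw

section Trajectory

variable {S : Type*} {κ : S → PMF S} {ω : ℕ → S}

lemma kerReach_of_le (hω : ∀ n, kerEdge κ (ω n) (ω (n + 1))) {m n : ℕ} (hmn : m ≤ n) :
    kerReach κ (ω m) (ω n) := by
  induction n, hmn using Nat.le_induction with
  | base => exact .refl
  | succ n _ ih => exact ih.tail (hω n)

lemma isBSCC_setOf_infinite [Finite S] (hω : ∀ n, kerEdge κ (ω n) (ω (n + 1)))
    (hclosed : ∀ s t, kerEdge κ s t → {n | ω n = s}.Infinite → {n | ω n = t}.Infinite) :
    IsBSCC κ {b | {n | ω n = b}.Infinite} := by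
  have hreach : ∀ a ∈ {b | {n | ω n = b}.Infinite}, ∀ b, kerReach κ a b →
      b ∈ {b | {n | ω n = b}.Infinite} := fun a ha b hab => by
    induction hab with
    | refl => exact ha
    | tail _ e ih => exact hclosed _ _ e ih
  refine ⟨?_, fun a ha b hb => ?_, fun a ha b hab => hreach a ha b (.single hab),
    fun a ha b hab _ => hreach a ha b hab⟩
  · obtain ⟨b, hb⟩ := Finite.exists_infinite_fiber ω
    exact ⟨b, Set.infinite_coe_iff.1 hb⟩
  · obtain ⟨m, rfl⟩ := ha.nonempty
    obtain ⟨n, rfl, hmn⟩ := hb.exists_gt m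
    exact kerReach_of_le hω hmn.le

lemma exists_forall_ge_mem_setOf_infinite [Finite S] (ω : ℕ → S) :
    ∃ N, ∀ n ≥ N, ω n ∈ {b | {n | ω n = b}.Infinite} := by
  refine eventually_atTop.1 ?_
  rw [← Nat.cofinite_eq_atTop, eventually_cofinite]
  exact (Set.toFinite _).preimage' fun b hb => Set.not_infinite.1 hb

end Trajectory

end MarkovChainPath

open MarkovChainPath in
theorem ae_eventually_in_BSCC_general {S : Type*} [Fintype S] [DecidableEq S]
    [MeasurableSpace S] [MeasurableSingletonClass S]
    (κ : S → PMF S) (s₀ : S)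
    (P : Measure (ℕ → S)) [IsProbabilityMeasure P]
    (hP : ∀ (k : ℕ) (f : ℕ → S),
      P {ω | ∀ i ≤ k, ω i = f i} =
        (if f 0 = s₀ then 1 else 0) * ∏ i ∈ Finset.range k, κ (f i) (f (i + 1))) :
    ∀ᵐ ω ∂P, ∃ B : Set S, IsBSCC κ B ∧
      ∃ N : ℕ, (∀ n ≥ N, ω n ∈ B) ∧ ∀ b ∈ B, {n : ℕ | ω n = b}.Infinite := by
  have hP' : IsPathLaw κ s₀ P := hP
  have hclosed : ∀ᵐ ω ∂P, ∀ s t, kerEdge κ s t →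
      {n | ω n = s}.Infinite → {n | ω n = t}.Infinite :=
    ae_all_iff.2 fun s => ae_all_iff.2 fun t =>
      eventually_imp_distrib_left.2 fun hst => hP'.ae_infinite_of_kerEdge hst
  filter_upwards [hP'.ae_kerEdge, hclosed] with ω hω hωclosed
  obtain ⟨N, hN⟩ := exists_forall_ge_mem_setOf_infinite ω
  exact ⟨_, isBSCC_setOf_infinite hω hωclosed, N, hN, fun b hb => hb⟩

/-- Let `S` be a finite nonempty set, `κ` a Markov kernel on
`S`, `s₀ ∈ S`, and let `P` be the law on trajectory space of the Markov chain
started at `s₀` with kernel `κ` (characterized by its values on cylinders).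
Then `P`-almost every trajectory `ω` eventually stays in some BSCC `B` of the
digraph of `κ` and visits every state of `B` infinitely often. -/
theorem ae_eventually_in_BSCC {S : Type*} [Fintype S] [Nonempty S] [DecidableEq S]
    [MeasurableSpace S] [MeasurableSingletonClass S]
    (κ : S → PMF S) (s₀ : S)
    (P : Measure (ℕ → S)) [IsProbabilityMeasure P]
    (hP : ∀ (k : ℕ) (f : ℕ → S),
      P {ω | ∀ i ≤ k, ω i = f i} =
        (if f 0 = s₀ then 1 else 0) * ∏ i ∈ Finset.range k, κ (f i) (f (i + 1))) :
    ∀ᵐ ω ∂P, ∃ B : Set S, IsBSCC κ B ∧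
      ∃ N : ℕ, (∀ n ≥ N, ω n ∈ B) ∧ ∀ b ∈ B, {n : ℕ | ω n = b}.Infinite :=
  ae_eventually_in_BSCC_general κ s₀ P hP
end

section
/- Let S be a finite nonempty set, κ a Markov kernel on S, and s₀ ∈ S. Assume every state of S is reachable from s₀ in the digraph of κ and that the digraph of κ has a unique BSCC. Then for all subsets F, G ⊆ S, the P_{s₀}-probability of the set of trajectories ω such that ω_n ∈ F for infinitely many n and ω_n ∈ G for only finitely many n is either 0 or 1. -/
open MeasureTheory Filter

/-!
Let `B` be the unique BSCC. Every state reaches some BSCC, hence `B`, hence every state of `B`.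
If every state reaches a set `T`, then from any state the probability of avoiding `T` for
`k * L` steps is at most `c ^ k` for some `c < 1`, so `T` is visited infinitely often almost
surely; in particular this holds for every `T` meeting `B`. Since `B` is closed, a trajectory that
enters `B` almost surely never leaves it, so `Bᶜ` is visited only finitely often. Hence the event
is null if `G` meets `B` or `F` misses `B`, and almost sure otherwise.
-/

open scoped ENNReal

namespace PMF

variable {α : Type*}

lemma tsum_mul_le {p : PMF α} {f : α → ℝ≥0∞} {c : ℝ≥0∞} (h : ∀ a, f a ≤ c) :
    ∑' a, p a * f a ≤ c :=
  calc ∑' a, p a * f a ≤ ∑' a, p a * c := ENNReal.tsum_le_tsum fun a => by gcongr; exact h a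
    _ = c := by rw [ENNReal.tsum_mul_right, p.tsum_coe, one_mul]

lemma tsum_mul_lt_one {p : PMF α} {f : α → ℝ≥0∞} {a : α} (h : ∀ b, f b ≤ 1) (ha : p a ≠ 0)
    (hfa : f a < 1) : ∑' b, p b * f b < 1 :=
  calc ∑' b, p b * f b < ∑' b, p b * 1 :=
        ENNReal.tsum_lt_tsum (ne_top_of_le_ne_top ENNReal.one_ne_top (tsum_mul_le h))
          (fun b => by gcongr; exact h b) (by gcongr; exact p.apply_ne_top a)
    _ = 1 := by simp only [mul_one, p.tsum_coe]

end PMF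

section StayProb

variable {S : Type*} (κ : S → PMF S)

/-- The probability that the chain started at `s` is in `A i` at every time `i ≤ k`. -/
noncomputable def stayProb : (ℕ → Set S) → ℕ → S → ℝ≥0∞
  | A, 0 => (A 0).indicator 1
  | A, k + 1 => (A 0).indicator fun s => ∑' t, κ s t * stayProb (fun i => A (i + 1)) k t

variable {κ}

lemma stayProb_of_notMem {A : ℕ → Set S} {s : S} (hs : s ∉ A 0) (k : ℕ) :
    stayProb κ A k s = 0 := by
  cases k <;> exact Set.indicator_of_notMem hs _

lemma stayProb_succ_of_mem {A : ℕ → Set S} {s : S} (hs : s ∈ A 0) (k : ℕ) :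
    stayProb κ A (k + 1) s = ∑' t, κ s t * stayProb κ (fun i => A (i + 1)) k t :=
  Set.indicator_of_mem hs _

lemma stayProb_le_one (A : ℕ → Set S) (k : ℕ) (s : S) : stayProb κ A k s ≤ 1 := by
  induction k generalizing A s with
  | zero => exact Set.indicator_apply_le' (fun _ => le_rfl) (fun _ => zero_le_one)
  | succ k ih =>
    exact Set.indicator_apply_le' (fun _ => PMF.tsum_mul_le (ih _)) (fun _ => zero_le_one)

lemma stayProb_mono {A A' : ℕ → Set S} (h : ∀ i, A i ⊆ A' i) (k : ℕ) (s : S) :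
    stayProb κ A k s ≤ stayProb κ A' k s := by
  induction k generalizing A A' s with
  | zero => exact Set.indicator_le_indicator_of_subset (h 0) (fun _ => zero_le) s
  | succ k ih =>
    by_cases hs : s ∈ A 0
    · rw [stayProb_succ_of_mem hs, stayProb_succ_of_mem (h 0 hs)]
      exact ENNReal.tsum_le_tsum fun t => by gcongr; exact ih (fun i => h (i + 1)) t
    · rw [stayProb_of_notMem hs]
      exact zero_le

/-- The Markov property at time `a`. -/
lemma stayProb_add_le {A : ℕ → Set S} {a b : ℕ} {c : ℝ≥0∞}
    (h : ∀ t, stayProb κ (fun i => A (i + a)) b t ≤ c) (s : S) :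
    stayProb κ A (a + b) s ≤ stayProb κ A a s * c := by
  induction a generalizing A s with
  | zero =>
    by_cases hs : s ∈ A 0
    · simpa [stayProb, hs] using h s
    · simp [stayProb_of_notMem hs]
  | succ a ih =>
    by_cases hs : s ∈ A 0
    · rw [Nat.add_right_comm, stayProb_succ_of_mem hs, stayProb_succ_of_mem hs,
        ← ENNReal.tsum_mul_right]
      exact ENNReal.tsum_le_tsum fun t => by rw [mul_assoc]; gcongr; exact ih h t
    · simp [stayProb_of_notMem hs]

lemma stayProb_antitone (A : ℕ → Set S) (s : S) : Antitone fun k => stayProb κ A k s :=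
  antitone_nat_of_succ_le fun k => by
    simpa using stayProb_add_le (b := 1) (fun t => stayProb_le_one _ 1 t) s

lemma exists_stayProb_compl_lt_one {T : Set S} {s b : S} (hb : b ∈ T) (hsb : kerReach κ s b) :
    ∃ n, stayProb κ (fun _ => Tᶜ) n s < 1 := by
  induction hsb using Relation.ReflTransGen.head_induction_on with
  | refl => exact ⟨0, by simp [stayProb, hb]⟩
  | @head a c hac _ ih =>
    obtain ⟨n, hn⟩ := ih
    by_cases ha : a ∈ T
    · exact ⟨0, by simp [stayProb, ha]⟩
    · refine ⟨n + 1, ?_⟩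
      rw [stayProb_succ_of_mem ha]
      exact PMF.tsum_mul_lt_one (fun t => stayProb_le_one _ n t) hac hn

lemma exists_stayProb_compl_le_pow [Finite S] {T : Set S} (hT : ∀ s, ∃ b ∈ T, kerReach κ s b) :
    ∃ (L : ℕ) (c : ℝ≥0∞), c < 1 ∧ ∀ k s, stayProb κ (fun _ => Tᶜ) (k * L) s ≤ c ^ k := by
  have : Fintype S := Fintype.ofFinite S
  choose n hn using fun s => (hT s).elim fun b hb => exists_stayProb_compl_lt_one hb.1 hb.2
  set L := Finset.univ.sup n
  have hL : ∀ s, stayProb κ (fun _ => Tᶜ) L s < 1 := fun s =>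
    (stayProb_antitone (κ := κ) _ s (Finset.le_sup (f := n) (Finset.mem_univ s))).trans_lt
      (hn s)
  refine ⟨L, Finset.univ.sup (stayProb κ (fun _ => Tᶜ) L), ?_, fun k => ?_⟩
  · exact (Finset.sup_lt_iff zero_lt_one).2 fun s _ => hL s
  · induction k with
    | zero => exact fun s => by simpa using stayProb_le_one _ 0 s
    | succ k ih =>
      intro s
      rw [Nat.succ_mul, pow_succ]
      calc _ ≤ _ := stayProb_add_le (fun t => Finset.le_sup (Finset.mem_univ t)) s
        _ ≤ _ := by gcongr; exact ih s

end StayProb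

lemma exists_isBSCC_reach {S : Type*} [Finite S] (κ : S → PMF S) (s : S) :
    ∃ B, IsBSCC κ B ∧ ∃ t ∈ B, kerReach κ s t := by
  obtain ⟨t, hst, hmin⟩ := exists_minimalFor_of_wellFoundedLT (kerReach κ s)
    (fun u => {v | kerReach κ u v}) ⟨s, .refl⟩
  have hback : ∀ a, kerReach κ t a → kerReach κ a t := fun a hta =>
    hmin (hst.trans hta) (fun _ hav => hta.trans hav) .refl
  refine ⟨{v | kerReach κ t v}, ⟨⟨t, .refl⟩, fun a ha b hb => (hback a ha).trans hb,
    fun a ha b hab => ha.tail hab, fun a ha b hab _ => ha.trans hab⟩, t, .refl, hst⟩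

section MarkovChainLaw

variable {S : Type*} [DecidableEq S] [MeasurableSpace S]

def IsMarkovChainLaw (κ : S → PMF S) (s₀ : S) (P : Measure (ℕ → S)) : Prop :=
  ∀ (k : ℕ) (f : ℕ → S), P {ω | ∀ i ≤ k, ω i = f i} =
    (if f 0 = s₀ then 1 else 0) * ∏ i ∈ Finset.range k, κ (f i) (f (i + 1))

variable {κ : S → PMF S} {s₀ : S} {P : Measure (ℕ → S)}

lemma IsMarkovChainLaw.measure_cylinder_succ (hP : IsMarkovChainLaw κ s₀ P) (j : ℕ)
    (f : ℕ → S) :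
    P {ω | ∀ i ≤ j + 1, ω i = f i} = P {ω | ∀ i ≤ j, ω i = f i} * κ (f j) (f (j + 1)) := by
  rw [hP, hP, Finset.prod_range_succ, mul_assoc]

lemma IsMarkovChainLaw.measure_cylinder_inter_le [Countable S] (hP : IsMarkovChainLaw κ s₀ P)
    (A : ℕ → Set S) (k j : ℕ) (f : ℕ → S) :
    P {ω | (∀ i ≤ j, ω i = f i) ∧ ∀ i ≤ k, ω (j + i) ∈ A i} ≤
      P {ω | ∀ i ≤ j, ω i = f i} * stayProb κ A k (f j) := by
  have hempty : ∀ (A : ℕ → Set S) k j (f : ℕ → S), f j ∉ A 0 →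
      P {ω | (∀ i ≤ j, ω i = f i) ∧ ∀ i ≤ k, ω (j + i) ∈ A i} = 0 := by
    refine fun A k j f hj => measure_mono_null ?_ measure_empty
    rintro ω ⟨hcyl, hA⟩
    exact hj (hcyl j le_rfl ▸ hA 0 (Nat.zero_le k))
  induction k generalizing A j f with
  | zero =>
    by_cases hj : f j ∈ A 0
    · simp only [stayProb, Set.indicator_of_mem hj, Pi.one_apply, mul_one]
      exact measure_mono fun ω hω => hω.1
    · exact (hempty A 0 j f hj).trans_le zero_le
  | succ k ih =>
    by_cases hj : f j ∈ A 0
    swap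
    · exact (hempty A (k + 1) j f hj).trans_le zero_le
    rw [stayProb_succ_of_mem hj, ← ENNReal.tsum_mul_left]
    calc P {ω | (∀ i ≤ j, ω i = f i) ∧ ∀ i ≤ k + 1, ω (j + i) ∈ A i}
        ≤ P (⋃ t, {ω | (∀ i ≤ j + 1, ω i = Function.update f (j + 1) t i) ∧
            ∀ i ≤ k, ω (j + 1 + i) ∈ A (i + 1)}) := by
          refine measure_mono fun ω ⟨hcyl, hA⟩ => Set.mem_iUnion.2 ⟨ω (j + 1), ?_, ?_⟩
          · intro i hi
            rcases hi.lt_or_eq with hi | rfl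
            · rw [Function.update_of_ne (by omega)]
              exact hcyl i (by omega)
            · simp
          · intro i hi
            simpa [Nat.add_right_comm, Nat.add_assoc] using hA (i + 1) (by omega)
      _ ≤ ∑' t, P {ω | (∀ i ≤ j + 1, ω i = Function.update f (j + 1) t i) ∧
            ∀ i ≤ k, ω (j + 1 + i) ∈ A (i + 1)} := measure_iUnion_le _
      _ ≤ ∑' t, P {ω | ∀ i ≤ j + 1, ω i = Function.update f (j + 1) t i} *
            stayProb κ (fun i => A (i + 1)) k t :=
          ENNReal.tsum_le_tsum fun t => by
            simpa using ih (fun i => A (i + 1)) (j + 1) (Function.update f (j + 1) t)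
      _ = _ := tsum_congr fun t => by
          have hcyl : {ω : ℕ → S | ∀ i ≤ j, ω i = Function.update f (j + 1) t i} =
              {ω | ∀ i ≤ j, ω i = f i} := by
            ext ω
            refine forall₂_congr fun i hi => ?_
            rw [Function.update_of_ne (by omega)]
          rw [hP.measure_cylinder_succ, hcyl, Function.update_self,
            Function.update_of_ne (by omega), mul_assoc]

lemma IsMarkovChainLaw.measure_stay_le [Countable S] (hP : IsMarkovChainLaw κ s₀ P)
    (A : ℕ → Set S) (k : ℕ) : P {ω | ∀ i ≤ k, ω i ∈ A i} ≤ stayProb κ A k s₀ :=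
  calc P {ω | ∀ i ≤ k, ω i ∈ A i}
      ≤ P (⋃ s, {ω | (∀ i ≤ 0, ω i = (fun _ => s) i) ∧ ∀ i ≤ k, ω (0 + i) ∈ A i}) :=
        measure_mono fun ω hω => Set.mem_iUnion.2
          ⟨ω 0, fun i hi => by rw [Nat.le_zero.1 hi], by simpa using hω⟩
    _ ≤ ∑' s, P {ω | (∀ i ≤ 0, ω i = (fun _ => s) i) ∧ ∀ i ≤ k, ω (0 + i) ∈ A i} :=
        measure_iUnion_le _
    _ ≤ ∑' s, P {ω | ∀ i ≤ 0, ω i = (fun _ => s) i} * stayProb κ A k s :=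
        ENNReal.tsum_le_tsum fun s => hP.measure_cylinder_inter_le A k 0 _
    _ = stayProb κ A k s₀ := by
        simp only [hP 0, Finset.range_zero, Finset.prod_empty, mul_one, ite_mul, one_mul,
          zero_mul, tsum_ite_eq]

lemma IsMarkovChainLaw.ae_infinite_visits [Finite S] (hP : IsMarkovChainLaw κ s₀ P) {T : Set S}
    (hT : ∀ s, ∃ b ∈ T, kerReach κ s b) : ∀ᵐ ω ∂P, {n | ω n ∈ T}.Infinite := by
  obtain ⟨L, c, hc, hdecay⟩ := exists_stayProb_compl_le_pow hT
  simp_rw [← Nat.frequently_atTop_iff_infinite, frequently_atTop]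
  refine ae_all_iff.2 fun m => ae_iff.2 ?_
  push Not
  refine le_antisymm (ge_of_tendsto' (ENNReal.tendsto_pow_atTop_nhds_zero_of_lt_one hc)
    fun k => ?_) zero_le
  calc P {ω | ∀ n ≥ m, ω n ∉ T}
      ≤ P {ω | ∀ i ≤ m + k * L, ω i ∈ {u | m ≤ i → u ∉ T}} :=
        measure_mono fun ω hω i _ hmi => hω i hmi
    _ ≤ stayProb κ (fun i => {u | m ≤ i → u ∉ T}) (m + k * L) s₀ := hP.measure_stay_le _ _
    _ ≤ stayProb κ (fun i => {u | m ≤ i → u ∉ T}) m s₀ * c ^ k :=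
        stayProb_add_le (fun t => (stayProb_mono (A' := fun _ => Tᶜ)
          (fun i u (hu : m ≤ i + m → u ∉ T) => hu (Nat.le_add_left m i)) _ t).trans
          (hdecay k t)) s₀
    _ ≤ c ^ k := mul_le_of_le_one_left zero_le (stayProb_le_one _ _ _)

lemma IsMarkovChainLaw.ae_mem_succ_of_mem [Countable S] (hP : IsMarkovChainLaw κ s₀ P)
    {B : Set S} (hB : ∀ a ∈ B, ∀ b, kerEdge κ a b → b ∈ B) :
    ∀ᵐ ω ∂P, ∀ j, ω j ∈ B → ω (j + 1) ∈ B := by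
  refine ae_all_iff.2 fun j => ae_iff.2 ?_
  push Not
  set A : ℕ → Set S := fun i => {u | (i = j → u ∈ B) ∧ (i = j + 1 → u ∉ B)}
  have hexit : ∀ t, stayProb κ (fun i => A (i + j)) 1 t ≤ 0 := by
    intro t
    by_cases ht : t ∈ A (0 + j)
    · rw [stayProb_succ_of_mem ht]
      refine (ENNReal.tsum_eq_zero.2 fun u => ?_).le
      by_cases hu : kerEdge κ t u
      · simp [stayProb, A, hB t (by simpa [A] using ht.1) u hu, add_comm]
      · rw [kerEdge, not_not] at hu
        simp [hu]
    · rw [stayProb_of_notMem ht]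
  refine le_antisymm ?_ zero_le
  calc P {ω | ω j ∈ B ∧ ω (j + 1) ∉ B} ≤ P {ω | ∀ i ≤ j + 1, ω i ∈ A i} :=
        measure_mono fun ω hω i _ => ⟨fun h => h ▸ hω.1, fun h => h ▸ hω.2⟩
    _ ≤ stayProb κ A (j + 1) s₀ := hP.measure_stay_le A (j + 1)
    _ ≤ stayProb κ A j s₀ * 0 := stayProb_add_le hexit s₀
    _ = 0 := mul_zero _

lemma IsMarkovChainLaw.ae_finite_visits_compl [Finite S] (hP : IsMarkovChainLaw κ s₀ P)
    {B : Set S} (hclosed : ∀ a ∈ B, ∀ b, kerEdge κ a b → b ∈ B)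
    (hB : ∀ s, ∃ b ∈ B, kerReach κ s b) : ∀ᵐ ω ∂P, {n | ω n ∉ B}.Finite := by
  filter_upwards [hP.ae_infinite_visits hB, hP.ae_mem_succ_of_mem hclosed] with ω hinf hstep
  obtain ⟨i, hi⟩ := hinf.nonempty
  refine (Set.finite_Iio i).subset fun n hn => ?_
  by_contra hin
  exact hn (Nat.le_induction hi (fun n _ => hstep n) n (not_lt.1 hin))

end MarkovChainLaw

theorem zero_one_law_rabin_general {S : Type*} [Fintype S] [DecidableEq S]
    [MeasurableSpace S]
    (κ : S → PMF S) (s₀ : S)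
    (P : Measure (ℕ → S)) [IsProbabilityMeasure P]
    (hP : ∀ (k : ℕ) (f : ℕ → S),
      P {ω | ∀ i ≤ k, ω i = f i} =
        (if f 0 = s₀ then 1 else 0) * ∏ i ∈ Finset.range k, κ (f i) (f (i + 1)))
    (huniq : ∃! B : Set S, IsBSCC κ B) :
    ∀ F G : Set S,
      P {ω | {n : ℕ | ω n ∈ F}.Infinite ∧ {n : ℕ | ω n ∈ G}.Finite} = 0 ∨
      P {ω | {n : ℕ | ω n ∈ F}.Infinite ∧ {n : ℕ | ω n ∈ G}.Finite} = 1 := by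
  have hP : IsMarkovChainLaw κ s₀ P := hP
  obtain ⟨B, hB, hBuniq⟩ := huniq
  have hreach : ∀ s, ∀ b ∈ B, kerReach κ s b := fun s b hb => by
    obtain ⟨B', hB', t, ht, hst⟩ := exists_isBSCC_reach κ s
    rw [hBuniq B' hB'] at ht
    exact hst.trans (hB.2.1 t ht b hb)
  have hvisit : ∀ T : Set S, (T ∩ B).Nonempty → ∀ᵐ ω ∂P, {n | ω n ∈ T}.Infinite :=
    fun T ⟨b, hbT, hbB⟩ =>
      hP.ae_infinite_visits fun s => ⟨b, hbT, hreach s b hbB⟩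
  have hleave : ∀ᵐ ω ∂P, {n | ω n ∉ B}.Finite :=
    hP.ae_finite_visits_compl hB.2.2.1 fun s =>
      ⟨_, hB.1.some_mem, hreach s _ hB.1.some_mem⟩
  have hfinite : ∀ T : Set S, ¬(T ∩ B).Nonempty → ∀ᵐ ω ∂P, {n | ω n ∈ T}.Finite :=
    fun T hT => hleave.mono fun ω hω => hω.subset fun n hn hnB => hT ⟨ω n, hn, hnB⟩
  intro F G
  by_cases hF : (F ∩ B).Nonempty
  · by_cases hG : (G ∩ B).Nonempty
    · exact .inl <| measure_eq_zero_iff_ae_notMem.2 <|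
        (hvisit G hG).mono fun ω hω h => hω h.2
    · refine .inr <| (measure_congr (ae_eq_univ.2 (ae_iff.1 ?_))).trans measure_univ
      filter_upwards [hvisit F hF, hfinite G hG] with ω hFω hGω using ⟨hFω, hGω⟩
  · exact .inl <| measure_eq_zero_iff_ae_notMem.2 <|
      (hfinite F hF).mono fun ω hω h => h.1 hω

/-- Let `κ` be a Markov kernel on a finite nonempty set `S`,
`s₀ ∈ S`, and let `P` be the law on trajectory space of the Markov chain
started at `s₀` with kernel `κ`. If every state is reachable from `s₀` and the
digraph of `κ` has a unique BSCC, then for all `F G ⊆ S` the probability of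
the set of trajectories visiting `F` infinitely often and `G` only finitely
often is either `0` or `1`. -/
theorem zero_one_law_rabin {S : Type*} [Fintype S] [Nonempty S] [DecidableEq S]
    [MeasurableSpace S] [MeasurableSingletonClass S]
    (κ : S → PMF S) (s₀ : S)
    (P : Measure (ℕ → S)) [IsProbabilityMeasure P]
    (hP : ∀ (k : ℕ) (f : ℕ → S),
      P {ω | ∀ i ≤ k, ω i = f i} =
        (if f 0 = s₀ then 1 else 0) * ∏ i ∈ Finset.range k, κ (f i) (f (i + 1)))
    (hreach : ∀ s : S, kerReach κ s₀ s)
    (huniq : ∃! B : Set S, IsBSCC κ B) :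
    ∀ F G : Set S,
      P {ω | {n : ℕ | ω n ∈ F}.Infinite ∧ {n : ℕ | ω n ∈ G}.Finite} = 0 ∨
      P {ω | {n : ℕ | ω n ∈ F}.Infinite ∧ {n : ℕ | ω n ∈ G}.Finite} = 1 :=
  zero_one_law_rabin_general κ s₀ P hP huniq
end

section
/- Let S be a finite nonempty set, κ a Markov kernel on S, and s₀ ∈ S. Assume every state of S is reachable from s₀ in the digraph of κ and that the digraph of κ has a unique BSCC B. Then for all subsets F, G ⊆ S, the P_{s₀}-probability of the set of trajectories ω such that ω_n ∈ F for infinitely many n and ω_n ∈ G for only finitely many n equals 1 if F ∩ B ≠ ∅ and G ∩ B = ∅, and equals 0 otherwise. -/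
open MeasureTheory Filter

set_option linter.unusedSectionVars false
set_option linter.unusedVariables false
set_option maxHeartbeats 1000000

section
variable {S : Type*} [Fintype S] [DecidableEq S]

/-- chain extraction -/
lemma exists_chain {κ : S → PMF S} {s b : S} (h : kerReach κ s b) :
    ∃ (ℓ : ℕ) (c : ℕ → S), c 0 = s ∧ c ℓ = b ∧ ∀ i < ℓ, kerEdge κ (c i) (c (i+1)) := by
  induction h with
  | refl => exact ⟨0, fun _ => s, rfl, rfl, fun i hi => absurd hi (Nat.not_lt_zero i)⟩
  | @tail x y _ hedge ih =>
    obtain ⟨ℓ, c, hc0, hcl, hce⟩ := ih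
    refine ⟨ℓ + 1, fun n => if n ≤ ℓ then c n else y, by simpa using hc0, by simp, ?_⟩
    intro i hi
    rcases Nat.lt_or_ge i ℓ with h1 | h1
    · simpa [Nat.le_of_lt h1, Nat.succ_le_of_lt h1] using hce i h1
    · have : i = ℓ := by omega
      subst this
      simpa [hcl] using hedge

open Classical in
/-- from any state one can reach a state in some BSCC -/
lemma exists_reach_BSCC (κ : S → PMF S) (s : S) :
    ∃ (C : Set S) (t : S), IsBSCC κ C ∧ t ∈ C ∧ kerReach κ s t := by
  classical
  set r := kerReach κ with hr
  have rtrans : ∀ {a b c : S}, r a b → r b c → r a c := fun h1 h2 => h1.trans h2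
  have rrefl : ∀ a : S, r a a := fun a => Relation.ReflTransGen.refl
  set fwd : S → Finset S := fun t => Finset.univ.filter (fun u => r t u) with hfwd
  set R : Finset S := fwd s with hR
  have hsR : s ∈ R := by simp [hR, hfwd, rrefl]
  obtain ⟨t, htR, htmin⟩ := R.exists_min_image (fun t => (fwd t).card) ⟨s, hsR⟩
  have hst : r s t := by simpa [hR, hfwd] using htR
  have key : ∀ u, r t u → r u t := by
    intro u htu
    by_contra hut
    have hsub : fwd u ⊆ fwd t := by
      intro v hv
      simp only [hfwd, Finset.mem_filter, Finset.mem_univ, true_and] at hv ⊢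
      exact rtrans htu hv
    have hne : t ∈ fwd t := by simp [hfwd, rrefl]
    have hnu : t ∉ fwd u := by simp [hfwd]; exact hut
    have : (fwd u).card < (fwd t).card :=
      Finset.card_lt_card (Finset.ssubset_iff_of_subset hsub |>.2 ⟨t, hne, hnu⟩)
    have huR : u ∈ R := by
      simp only [hR, hfwd, Finset.mem_filter, Finset.mem_univ, true_and]
      exact rtrans hst htu
    exact absurd (htmin u huR) (by omega)
  refine ⟨{u | r t u ∧ r u t}, t, ⟨⟨t, rrefl t, rrefl t⟩, ?_, ?_, ?_⟩, ⟨rrefl t, rrefl t⟩, hst⟩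
  · rintro a ⟨-, hat⟩ b ⟨htb, -⟩
    exact rtrans hat htb
  · rintro a ⟨hta, hat⟩ b hab
    have htb : r t b := rtrans hta (Relation.ReflTransGen.single hab)
    exact ⟨htb, key b htb⟩
  · rintro a ⟨hta, hat⟩ b hab hba
    exact ⟨rtrans hta hab, rtrans hba hat⟩

lemma reach_all_of_uniq (κ : S → PMF S) (B : Set S) (hB : IsBSCC κ B)
    (huniq : ∀ B' : Set S, IsBSCC κ B' → B' = B) (s : S) {b : S} (hb : b ∈ B) :
    kerReach κ s b := by
  obtain ⟨C, t, hC, htC, hst⟩ := exists_reach_BSCC κ s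
  rw [huniq C hC] at htC
  exact hst.trans (hB.2.1 t htC b hb)

end

section
variable {S : Type*} [Fintype S] [DecidableEq S] [MeasurableSpace S] [MeasurableSingletonClass S]

noncomputable def wt (κ : S → PMF S) (s₀ : S) (k : ℕ) (f : ℕ → S) : ENNReal :=
  (if f 0 = s₀ then 1 else 0) * ∏ i ∈ Finset.range k, κ (f i) (f (i + 1))

def cyl (k : ℕ) (f : ℕ → S) : Set (ℕ → S) := {ω | ∀ i ≤ k, ω i = f i}

def ext (k : ℕ) (v : Fin (k+1) → S) : ℕ → S := fun n => v ⟨min n k, by omega⟩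

lemma ext_agree (k : ℕ) (v : Fin (k+1) → S) (i : ℕ) (hi : i ≤ k) :
    ext k v i = v ⟨i, by omega⟩ := by
  simp [ext, Nat.min_eq_left hi]

lemma measurableSet_cyl (k : ℕ) (f : ℕ → S) : MeasurableSet (cyl k f) := by
  have : cyl k f = ⋂ (i : ℕ) (_ : i ≤ k), (fun ω : ℕ → S => ω i) ⁻¹' {f i} := by
    ext ω; simp [cyl]
  rw [this]
  exact MeasurableSet.iInter fun i => MeasurableSet.iInter fun _ =>
    (measurable_pi_apply i) (measurableSet_singleton _)

variable {κ : S → PMF S} {s₀ : S}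

/-- avoidance window event -/
def avoid (b : S) (T K : ℕ) : Set (ℕ → S) := {ω | ∀ i, T ≤ i → i ≤ T + K → ω i ≠ b}

lemma mem_cyl_ext_self (k : ℕ) (ω : ℕ → S) :
    ω ∈ cyl k (ext k (fun j : Fin (k+1) => ω j.1)) := by
  intro i hi
  rw [ext_agree k _ i hi]

open Classical in
lemma decomp {κ : S → PMF S} {s₀ : S} (P : Measure (ℕ → S))
    (hP : ∀ k f, P (cyl k f) = wt κ s₀ k f)
    (k : ℕ) (A : Set (ℕ → S))
    (hA : ∀ ω ω', (∀ i ≤ k, ω i = ω' i) → ω ∈ A → ω' ∈ A) :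
    P A = ∑ v : Fin (k+1) → S, if ext k v ∈ A then wt κ s₀ k (ext k v) else 0 := by
  set g : (Fin (k+1) → S) → Set (ℕ → S) :=
    fun v => if ext k v ∈ A then cyl k (ext k v) else ∅ with hg
  have hgmem : ∀ v ω, ω ∈ g v → ext k v ∈ A ∧ ω ∈ cyl k (ext k v) := by
    intro v ω h
    by_cases hc : ext k v ∈ A
    · exact ⟨hc, by simpa [hg, if_pos hc] using h⟩
    · simp [hg, if_neg hc] at h
  have hAeq : A = ⋃ v, g v := by
    ext ω
    constructor
    · intro hω
      refine Set.mem_iUnion.2 ⟨fun j => ω j.1, ?_⟩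
      have hagree : ∀ i ≤ k, ω i = ext k (fun j : Fin (k+1) => ω j.1) i := by
        intro i hi; rw [ext_agree k _ i hi]
      simp only [hg, if_pos (hA ω _ hagree hω)]
      exact mem_cyl_ext_self k ω
    · intro hω
      obtain ⟨v, hv⟩ := Set.mem_iUnion.1 hω
      obtain ⟨hc, hv⟩ := hgmem v ω hv
      exact hA (ext k v) ω (fun i hi => (hv i hi).symm) hc
  have hdisj : Pairwise (Function.onFun Disjoint g) := by
    intro v w hvw
    refine Set.disjoint_left.2 fun ω hv hw => hvw ?_
    obtain ⟨hcv, hv⟩ := hgmem v ω hv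
    obtain ⟨hcw, hw⟩ := hgmem w ω hw
    funext j
    have h1 := hv j.1 (by omega)
    have h2 := hw j.1 (by omega)
    rw [ext_agree k v j.1 (by omega)] at h1
    rw [ext_agree k w j.1 (by omega)] at h2
    have : v ⟨j.1, by omega⟩ = w ⟨j.1, by omega⟩ := by rw [← h1, ← h2]
    simpa using this
  have hgm : ∀ v, MeasurableSet (g v) := by
    intro v
    by_cases hc : ext k v ∈ A
    · simp only [hg, if_pos hc]; exact measurableSet_cyl k _
    · simp only [hg, if_neg hc]; exact MeasurableSet.empty
  have : P A = ∑' v, P (g v) := by rw [hAeq, measure_iUnion hdisj hgm]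
  rw [this, tsum_fintype]
  congr 1
  funext v
  by_cases hc : ext k v ∈ A
  · simp only [hg, if_pos hc, hP]
  · simp only [hg, if_neg hc, measure_empty]


variable (P : Measure (ℕ → S)) (hP : ∀ k f, P (cyl k f) = wt κ s₀ k f)
include hP

lemma nulledge (n : ℕ) : P {ω : ℕ → S | κ (ω n) (ω (n+1)) = 0} = 0 := by
  classical
  rw [decomp P hP (n+1) _ (fun ω ω' hag h => by
    simp only [Set.mem_setOf_eq] at *
    rw [← hag n (by omega), ← hag (n+1) (le_refl _)]; exact h)]
  apply Finset.sum_eq_zero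
  intro v _
  by_cases hc : ext (n+1) v ∈ {ω : ℕ → S | κ (ω n) (ω (n+1)) = 0}
  · rw [if_pos hc]
    unfold wt
    have hc' : κ (ext (n+1) v n) (ext (n+1) v (n+1)) = 0 := hc
    rw [Finset.prod_eq_zero (Finset.self_mem_range_succ n) hc', mul_zero]
  · rw [if_neg hc]

open Classical in
lemma avoid_rec (b : S) (ℓ : S → ℕ) (c : S → ℕ → S)
    (hc0 : ∀ s, c s 0 = s) (hcb : ∀ s, c s (ℓ s) = b)
    (m : ℕ) (hm : ∀ s, ℓ s ≤ m)
    (p : ENNReal) (hp : ∀ s, p ≤ ∏ i ∈ Finset.range (ℓ s), κ (c s i) (c s (i+1)))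
    [IsProbabilityMeasure P]
    (T K : ℕ) :
    P (avoid b T (K + m)) ≤ (1 - p) * P (avoid b T K) := by
  set k := T + K with hk
  set lastv : (Fin (k+1) → S) → S := fun v => v ⟨k, by omega⟩ with hlastv
  set pext : (Fin (k+1) → S) → ℕ → S := fun v n =>
    if h : n ≤ k then v ⟨n, by omega⟩
    else c (lastv v) (min (n - k) (ℓ (lastv v))) with hpext
  have f1 : ∀ v, ∀ i ≤ k, pext v i = ext k v i := by
    intro v i hi
    rw [ext_agree k v i hi]
    simp [hpext, hi]
  have f2 : ∀ v, ∀ j ≤ ℓ (lastv v), pext v (k + j) = c (lastv v) j := by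
    intro v j hj
    rcases Nat.eq_zero_or_pos j with h0 | h0
    · subst h0
      simp only [Nat.add_zero]
      rw [f1 v k (le_refl k), ext_agree k v k (le_refl k), hc0]
    · have hnk : ¬ (k + j ≤ k) := by omega
      simp only [hpext, dif_neg hnk]
      congr 1
      omega
  have hAav : ∀ ω ω' : ℕ → S, (∀ i ≤ k, ω i = ω' i) → ω ∈ avoid b T K → ω' ∈ avoid b T K := by
    intro ω ω' hag h i hTi hik
    rw [← hag i hik]; exact h i hTi hik
  set g : (Fin (k+1) → S) → Set (ℕ → S) :=
    fun v => if ext k v ∈ avoid b T K then cyl (k + ℓ (lastv v)) (pext v) else ∅ with hg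
  have hgmem : ∀ v ω, ω ∈ g v →
      ext k v ∈ avoid b T K ∧ ω ∈ cyl (k + ℓ (lastv v)) (pext v) := by
    intro v ω h
    by_cases hc : ext k v ∈ avoid b T K
    · exact ⟨hc, by simpa [hg, if_pos hc] using h⟩
    · simp [hg, if_neg hc] at h
  set D : Set (ℕ → S) := ⋃ v, g v with hD
  -- D disjoint union
  have hdisj : Pairwise (Function.onFun Disjoint g) := by
    intro v w hvw
    refine Set.disjoint_left.2 fun ω hv hw => hvw ?_
    obtain ⟨hcv, hv⟩ := hgmem v ω hv
    obtain ⟨hcw, hw⟩ := hgmem w ω hw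
    funext j
    have h1 := hv j.1 (by omega)
    have h2 := hw j.1 (by omega)
    rw [f1 v j.1 (by omega), ext_agree k v j.1 (by omega)] at h1
    rw [f1 w j.1 (by omega), ext_agree k w j.1 (by omega)] at h2
    have : v ⟨j.1, by omega⟩ = w ⟨j.1, by omega⟩ := by rw [← h1, ← h2]
    simpa using this
  have hgm : ∀ v, MeasurableSet (g v) := by
    intro v
    by_cases hc : ext k v ∈ avoid b T K
    · simp only [hg, if_pos hc]; exact measurableSet_cyl _ _
    · simp only [hg, if_neg hc]; exact MeasurableSet.empty
  have hDm : MeasurableSet D := MeasurableSet.iUnion hgm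
  -- weight of extended cylinder
  have w1 : ∀ v : Fin (k+1) → S, wt κ s₀ (k + ℓ (lastv v)) (pext v)
      = wt κ s₀ k (ext k v) * ∏ j ∈ Finset.range (ℓ (lastv v)),
          κ (c (lastv v) j) (c (lastv v) (j+1)) := by
    intro v
    unfold wt
    rw [Finset.prod_range_add]
    have e0 : pext v 0 = ext k v 0 := f1 v 0 (by omega)
    have e1 : ∀ i ∈ Finset.range k, κ (pext v i) (pext v (i+1)) =
        κ (ext k v i) (ext k v (i+1)) := by
      intro i hi
      rw [Finset.mem_range] at hi
      rw [f1 v i (by omega), f1 v (i+1) (by omega)]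
    have e2 : ∀ j ∈ Finset.range (ℓ (lastv v)),
        κ (pext v (k + j)) (pext v (k + j + 1)) =
        κ (c (lastv v) j) (c (lastv v) (j+1)) := by
      intro j hj
      rw [Finset.mem_range] at hj
      have : k + j + 1 = k + (j + 1) := by omega
      rw [this, f2 v j (by omega), f2 v (j+1) (by omega)]
    rw [Finset.prod_congr rfl e1, Finset.prod_congr rfl e2, e0, mul_assoc]
  -- measure of D
  have PD : P D = ∑ v : Fin (k+1) → S,
      if ext k v ∈ avoid b T K then wt κ s₀ (k + ℓ (lastv v)) (pext v) else 0 := by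
    rw [hD, measure_iUnion hdisj hgm, tsum_fintype]
    congr 1
    funext v
    by_cases hc : ext k v ∈ avoid b T K
    · simp only [hg, if_pos hc, hP]
    · simp only [hg, if_neg hc, measure_empty]
  have PAv : P (avoid b T K) = ∑ v : Fin (k+1) → S,
      if ext k v ∈ avoid b T K then wt κ s₀ k (ext k v) else 0 :=
    decomp P hP k _ hAav
  have hPD_ge : p * P (avoid b T K) ≤ P D := by
    rw [PAv, PD, Finset.mul_sum]
    apply Finset.sum_le_sum
    intro v _
    by_cases hc : ext k v ∈ avoid b T K
    · rw [if_pos hc, if_pos hc, w1 v, mul_comm]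
      exact mul_le_mul_right (hp (lastv v)) _
    · rw [if_neg hc, if_neg hc, mul_zero]
  -- D ⊆ avoid
  have hDsub : D ⊆ avoid b T K := by
    rintro ω hω
    obtain ⟨v, hv⟩ := Set.mem_iUnion.1 hω
    obtain ⟨hc, hcyl⟩ := hgmem v ω hv
    refine hAav (ext k v) ω (fun i hi => ?_) hc
    rw [← f1 v i hi]
    exact (hcyl i (by omega)).symm
  -- avoid (K+m) ∩ D = ∅
  have hsub : avoid b T (K + m) ⊆ avoid b T K \ D := by
    intro ω hω
    constructor
    · intro i hTi hik; exact hω i hTi (by omega)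
    · intro hωD
      obtain ⟨v, hv⟩ := Set.mem_iUnion.1 hωD
      obtain ⟨hc, hcyl⟩ := hgmem v ω hv
      set s := lastv v with hs
      have hωk : ω k = s := by
        have := hcyl k (by omega)
        rw [f1 v k (le_refl k), ext_agree k v k (le_refl k)] at this
        exact this
      have hsnb : s ≠ b := by
        have := hω k (by omega) (by omega)
        rw [hωk] at this; exact this
      have hl1 : 1 ≤ ℓ s := by
        by_contra h
        have h0 : ℓ s = 0 := by omega
        have := hcb s
        rw [h0, hc0 s] at this
        exact hsnb this
      have hωb : ω (k + ℓ s) = b := by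
        have := hcyl (k + ℓ s) (le_refl _)
        rw [f2 v (ℓ s) (le_refl _), hcb s] at this
        exact this
      have := hω (k + ℓ s) (by omega) (by have := hm s; omega)
      exact this hωb
  calc P (avoid b T (K + m)) ≤ P (avoid b T K \ D) := measure_mono hsub
    _ = P (avoid b T K) - P D :=
        measure_diff hDsub hDm.nullMeasurableSet (measure_ne_top P D)
    _ ≤ P (avoid b T K) - p * P (avoid b T K) := tsub_le_tsub_left hPD_ge _
    _ = (1 - p) * P (avoid b T K) := by
        rw [ENNReal.sub_mul (fun _ _ => measure_ne_top P _), one_mul]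

lemma avoid_pow (b : S) (ℓ : S → ℕ) (c : S → ℕ → S)
    (hc0 : ∀ s, c s 0 = s) (hcb : ∀ s, c s (ℓ s) = b)
    (m : ℕ) (hm : ∀ s, ℓ s ≤ m)
    (p : ENNReal) (hp : ∀ s, p ≤ ∏ i ∈ Finset.range (ℓ s), κ (c s i) (c s (i+1)))
    [IsProbabilityMeasure P]
    (T j : ℕ) : P (avoid b T (j * m)) ≤ (1 - p) ^ j := by
  induction j with
  | zero => simpa using prob_le_one
  | succ j ih =>
    rw [show (j+1) * m = j * m + m from by ring]
    calc P (avoid b T (j * m + m)) ≤ (1 - p) * P (avoid b T (j * m)) :=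
          avoid_rec P hP b ℓ c hc0 hcb m hm p hp T (j * m)
      _ ≤ (1 - p) * (1 - p) ^ j := mul_le_mul_right ih _
      _ = (1 - p) ^ (j + 1) := by rw [pow_succ, mul_comm]

lemma visit_fin_null (b : S) (hreachb : ∀ s : S, kerReach κ s b)
    [IsProbabilityMeasure P] :
    P {ω : ℕ → S | {n : ℕ | ω n = b}.Finite} = 0 := by
  classical
  choose ℓ c hc0 hcb hce using fun s : S => exists_chain (hreachb s)
  set m : ℕ := Finset.univ.sup ℓ with hmdef
  have hm : ∀ s, ℓ s ≤ m := fun s => Finset.le_sup (Finset.mem_univ s)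
  set q : S → ENNReal := fun s => ∏ i ∈ Finset.range (ℓ s), κ (c s i) (c s (i+1)) with hq
  set p : ENNReal := Finset.univ.inf' ⟨b, Finset.mem_univ b⟩ q with hpdef
  have hp : ∀ s, p ≤ q s := fun s => Finset.inf'_le q (Finset.mem_univ s)
  have hp0 : p ≠ 0 := by
    obtain ⟨s, -, hs⟩ := Finset.exists_mem_eq_inf' ⟨b, Finset.mem_univ b⟩ q
    rw [hpdef, hs]
    rw [hq]
    refine (Finset.prod_ne_zero_iff).2 fun i hi => ?_
    exact hce s i (Finset.mem_range.1 hi)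
  have hlt : 1 - p < 1 := ENNReal.sub_lt_self ENNReal.one_ne_top one_ne_zero hp0
  have hT0 : ∀ T : ℕ, P {ω : ℕ → S | ∀ i, T ≤ i → ω i ≠ b} = 0 := by
    intro T
    have hle : ∀ j : ℕ, P {ω : ℕ → S | ∀ i, T ≤ i → ω i ≠ b} ≤ (1 - p) ^ j := by
      intro j
      refine le_trans (measure_mono ?_) (avoid_pow P hP b ℓ c hc0 hcb m hm p hp T j)
      intro ω hω i hTi _
      exact hω i hTi
    have htend : Tendsto (fun j : ℕ => (1 - p) ^ j) atTop (nhds 0) :=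
      ENNReal.tendsto_pow_atTop_nhds_zero_of_lt_one hlt
    have := ge_of_tendsto' htend hle
    simpa using this
  refine measure_mono_null ?_ (measure_iUnion_null hT0)
  intro ω hω
  simp only [Set.mem_setOf_eq] at hω
  obtain ⟨T, hT⟩ := hω.bddAbove
  refine Set.mem_iUnion.2 ⟨T + 1, fun i hi hib => ?_⟩
  have : i ≤ T := hT hib
  omega

end

/-- Let `κ` be a Markov kernel on a finite nonempty set `S`,
`s₀ ∈ S`, and let `P` be the law on trajectory space of the Markov chain
started at `s₀` with kernel `κ`. Assume every state is reachable from `s₀` and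
`B` is the unique BSCC of the digraph of `κ`. Then for all `F G ⊆ S` the
probability of the set of trajectories visiting `F` infinitely often and `G`
only finitely often equals `1` if `F ∩ B ≠ ∅` and `G ∩ B = ∅`, and `0`
otherwise. -/
theorem prob_rabin_eq_one_or_zero {S : Type*} [Fintype S] [Nonempty S] [DecidableEq S]
    [MeasurableSpace S] [MeasurableSingletonClass S]
    (κ : S → PMF S) (s₀ : S)
    (P : Measure (ℕ → S)) [IsProbabilityMeasure P]
    (hP : ∀ (k : ℕ) (f : ℕ → S),
      P {ω | ∀ i ≤ k, ω i = f i} =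
        (if f 0 = s₀ then 1 else 0) * ∏ i ∈ Finset.range k, κ (f i) (f (i + 1)))
    (hreach : ∀ s : S, kerReach κ s₀ s)
    (B : Set S) (hB : IsBSCC κ B) (huniq : ∀ B' : Set S, IsBSCC κ B' → B' = B) :
    ∀ F G : Set S,
      ((F ∩ B).Nonempty ∧ G ∩ B = ∅ →
        P {ω | {n : ℕ | ω n ∈ F}.Infinite ∧ {n : ℕ | ω n ∈ G}.Finite} = 1) ∧
      (¬((F ∩ B).Nonempty ∧ G ∩ B = ∅) →
        P {ω | {n : ℕ | ω n ∈ F}.Infinite ∧ {n : ℕ | ω n ∈ G}.Finite} = 0) := by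
  classical
  intro F G
  have hPc : ∀ k f, P (cyl k f) = wt κ s₀ k f := fun k f => hP k f
  set Nul : Set (ℕ → S) :=
    (⋃ n, {ω : ℕ → S | κ (ω n) (ω (n+1)) = 0}) ∪
    (⋃ b : S, ⋃ (_ : b ∈ B), {ω : ℕ → S | {n : ℕ | ω n = b}.Finite}) with hNul
  have hNnull : P Nul = 0 := by
    refine measure_union_null (measure_iUnion_null (nulledge P hPc)) ?_
    refine measure_iUnion_null fun b => measure_iUnion_null fun hb => ?_
    exact visit_fin_null P hPc b (fun s => reach_all_of_uniq κ B hB huniq s hb)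
  have hgood : ∀ ω : ℕ → S, ω ∉ Nul →
      (∀ b ∈ B, {n : ℕ | ω n = b}.Infinite) ∧ (∃ n₀, ∀ n, n₀ ≤ n → ω n ∈ B) := by
    intro ω hω
    simp only [hNul, Set.mem_union, Set.mem_iUnion, not_or, not_exists,
      Set.mem_setOf_eq] at hω
    obtain ⟨hedges, hvis⟩ := hω
    have hinf : ∀ b ∈ B, {n : ℕ | ω n = b}.Infinite := fun b hb => hvis b hb
    refine ⟨hinf, ?_⟩
    obtain ⟨b₀, hb₀⟩ := hB.1
    obtain ⟨n₀, hn₀⟩ := (hinf b₀ hb₀).nonempty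
    refine ⟨n₀, fun n hn => ?_⟩
    induction n, hn using Nat.le_induction with
    | base =>
      have : ω n₀ = b₀ := hn₀
      rw [this]; exact hb₀
    | succ n hn ih => exact hB.2.2.1 (ω n) ih (ω (n+1)) (hedges n)
  -- measurability
  have hmX : ∀ X : Set S, MeasurableSet X := fun X => X.toFinite.measurableSet
  have hEinf : ∀ X : Set S, {ω : ℕ → S | {n : ℕ | ω n ∈ X}.Infinite}
      = ⋂ N, ⋃ n, ⋃ (_ : N ≤ n), (fun ω : ℕ → S => ω n) ⁻¹' X := by
    intro X
    ext ω
    simp only [Set.mem_setOf_eq, Set.mem_iInter, Set.mem_iUnion, Set.mem_preimage]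
    constructor
    · intro h N
      by_contra hc
      push_neg at hc
      refine h (Set.Finite.subset (Set.finite_Iio N) ?_)
      intro n hn
      simp only [Set.mem_Iio]
      by_contra h'
      exact hc n (by omega) hn
    · intro h hfin
      obtain ⟨T, hT⟩ := hfin.bddAbove
      obtain ⟨n, hn, hmem⟩ := h (T+1)
      have := hT hmem; omega
  have hInfm : ∀ X : Set S, MeasurableSet {ω : ℕ → S | {n : ℕ | ω n ∈ X}.Infinite} := by
    intro X
    rw [hEinf X]
    exact MeasurableSet.iInter fun N => MeasurableSet.iUnion fun n =>
      MeasurableSet.iUnion fun _ => (measurable_pi_apply n) (hmX X)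
  have hEm : MeasurableSet
      {ω : ℕ → S | {n : ℕ | ω n ∈ F}.Infinite ∧ {n : ℕ | ω n ∈ G}.Finite} := by
    have : {ω : ℕ → S | {n : ℕ | ω n ∈ F}.Infinite ∧ {n : ℕ | ω n ∈ G}.Finite}
        = {ω : ℕ → S | {n : ℕ | ω n ∈ F}.Infinite} ∩
          {ω : ℕ → S | {n : ℕ | ω n ∈ G}.Infinite}ᶜ := by
      ext ω
      simp only [Set.mem_setOf_eq, Set.mem_inter_iff, Set.mem_compl_iff,
        Set.not_infinite]
    rw [this]
    exact (hInfm F).inter (hInfm G).compl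
  constructor
  · rintro ⟨⟨f₀, hf₀F, hf₀B⟩, hGB⟩
    rw [← prob_compl_eq_zero_iff hEm]
    refine measure_mono_null ?_ hNnull
    intro ω hω
    by_contra hωN
    apply hω
    obtain ⟨hinf, n₀, hn₀⟩ := hgood ω hωN
    constructor
    · refine Set.Infinite.mono (fun n hn => ?_) (hinf f₀ hf₀B)
      have : ω n = f₀ := hn
      simp only [Set.mem_setOf_eq, this]
      exact hf₀F
    · refine Set.Finite.subset (Set.finite_Iio n₀) fun n hn => ?_
      simp only [Set.mem_Iio]
      by_contra h'
      have hnB : ω n ∈ B := hn₀ n (by omega)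
      have : ω n ∈ G ∩ B := ⟨hn, hnB⟩
      rw [hGB] at this
      exact this
  · intro hcond
    refine measure_mono_null ?_ hNnull
    rintro ω ⟨hinfF, hfinG⟩
    by_contra hωN
    obtain ⟨hinf, n₀, hn₀⟩ := hgood ω hωN
    rcases not_and_or.1 hcond with hF | hG
    · rw [Set.not_nonempty_iff_eq_empty] at hF
      apply hinfF
      refine Set.Finite.subset (Set.finite_Iio n₀) fun n hn => ?_
      simp only [Set.mem_Iio]
      by_contra h'
      have hnB : ω n ∈ B := hn₀ n (by omega)
      have : ω n ∈ F ∩ B := ⟨hn, hnB⟩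
      rw [hF] at this
      exact this
    · obtain ⟨g₀, hg₀G, hg₀B⟩ := Set.nonempty_iff_ne_empty.2 hG
      refine (Set.Infinite.mono (fun n hn => ?_) (hinf g₀ hg₀B)) hfinG
      have : ω n = g₀ := hn
      simp only [Set.mem_setOf_eq, this]
      exact hg₀G
end

section
/- Let π = r_0 ⋯ r_n be a closed finite trace over U with unique bottom SCC B of its trace graph, and let p_min ∈ (0,1). Let M = (S,P,μ) be a finite-state Markov chain over U such that P(s,s') ≥ p_min whenever P(s,s') > 0, and suppose B is not closed under the transitions of M, i.e., there exist r_B ∈ B and r̄ ∉ B with P(r_B, r̄) > 0. Then L(M,π) ≤ (1 − p_min)^{m_π} · L(M_π,π). -/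
open Finset

/-- `#_π(a)`: the number of occurrences of `a` among `r 0, …, r (n-1)`. -/
def traceCount {U : Type*} [DecidableEq U] (r : ℕ → U) (n : ℕ) (a : U) : ℕ :=
  ((range n).filter (fun i => r i = a)).card


lemma mem_traceStates {U : Type*} [DecidableEq U] (r : ℕ → U) {n i : ℕ} (hi : i ≤ n) :
    r i ∈ traceStates r n :=
  Finset.mem_image.2 ⟨i, Finset.mem_range.2 (by omega), rfl⟩

lemma prod_trace_group {U : Type*} [DecidableEq U] (r : ℕ → U) (n : ℕ) (f : U → U → ℝ) :
    ∏ i ∈ range n, f (r i) (r (i + 1)) =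
      ∏ a ∈ traceStates r n, ∏ b ∈ traceStates r n, f a b ^ traceT r n a b := by
  have hmaps : ∀ i ∈ range n, (r i, r (i + 1)) ∈ traceStates r n ×ˢ traceStates r n := by
    intro i hi
    rw [Finset.mem_range] at hi
    exact Finset.mem_product.2 ⟨mem_traceStates r (by omega), mem_traceStates r (by omega)⟩
  rw [← Finset.prod_fiberwise_of_maps_to hmaps (fun i => f (r i) (r (i + 1))),
      ← Finset.prod_product']
  refine Finset.prod_congr rfl fun p hp => ?_
  have hset : (range n).filter (fun i => (r i, r (i + 1)) = p) =
      (range n).filter (fun i => r i = p.1 ∧ r (i + 1) = p.2) := by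
    apply Finset.filter_congr
    intro i _
    simp [Prod.ext_iff]
  rw [hset, traceT]
  rw [Finset.prod_congr rfl (fun i hi => ?_), Finset.prod_const]
  rw [Finset.mem_filter] at hi
  rw [hi.2.1, hi.2.2]

lemma traceT_rowsum {U : Type*} [DecidableEq U] (r : ℕ → U) (n : ℕ) (a : U) :
    ∑ b ∈ traceStates r n, traceT r n a b = traceCount r n a := by
  unfold traceT traceCount
  simp only [Finset.card_filter]
  rw [Finset.sum_comm]
  refine Finset.sum_congr rfl fun i hi => ?_
  rw [Finset.mem_range] at hi
  by_cases h : r i = a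
  · have hmem : r (i + 1) ∈ traceStates r n := mem_traceStates r (by omega)
    rw [if_pos h, Finset.sum_eq_single_of_mem (r (i + 1)) hmem]
    · simp [h]
    · intro b hb hne
      simp [Ne.symm hne]
  · simp [h]

lemma rowP_le_one {U : Type*} [DecidableEq U] (M : FinMC U) (a : U) (C : Finset U) :
    ∑ b ∈ C, M.P a b ≤ 1 := by
  by_cases ha : a ∈ M.S
  · calc ∑ b ∈ C, M.P a b ≤ ∑ b ∈ C ∪ M.S, M.P a b :=
        Finset.sum_le_sum_of_subset_of_nonneg Finset.subset_union_left
          (fun b _ _ => M.P_nonneg a b)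
      _ = ∑ b ∈ M.S, M.P a b :=
        (Finset.sum_subset Finset.subset_union_right
          (fun b _ hb => M.P_zero a b (Or.inr hb))).symm
      _ = 1 := M.P_row a ha
  · have h0 : ∑ b ∈ C, M.P a b = 0 :=
      Finset.sum_eq_zero fun b _ => M.P_zero a b (Or.inl ha)
    rw [h0]; norm_num

lemma mu_le_one {U : Type*} (M : FinMC U) (a : U) : M.μ a ≤ 1 := by
  by_cases ha : a ∈ M.S
  · rw [← M.μ_sum]
    exact Finset.single_le_sum (fun b _ => M.μ_nonneg b) ha
  · rw [M.μ_zero a ha]; norm_num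

lemma traceP_nonneg {U : Type*} [DecidableEq U] (r : ℕ → U) (n : ℕ) (a b : U) :
    0 ≤ traceP r n a b :=
  div_nonneg (Nat.cast_nonneg _) (Finset.sum_nonneg fun c _ => Nat.cast_nonneg _)


lemma gibbs_row {V : Type*} [DecidableEq V] (C : Finset V) (T : V → ℕ) (q : V → ℝ)
    (hq : ∀ c, 0 ≤ q c) (s : ℝ) (hs : 0 < s)
    (hsum : ∑ c ∈ C.filter (fun c => T c ≠ 0), q c ≤ s) :
    ∏ c ∈ C, q c ^ T c ≤
      s ^ (∑ c ∈ C, T c) * ∏ c ∈ C, ((T c : ℝ) / (∑ c' ∈ C, (T c' : ℝ))) ^ T c := by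
  by_cases hN : ∑ c ∈ C, T c = 0
  · have hT : ∀ c ∈ C, T c = 0 := by
      intro c hc
      exact (Finset.sum_eq_zero_iff.1 hN) c hc
    have h1 : ∏ c ∈ C, q c ^ T c = 1 := Finset.prod_eq_one fun c hc => by
      rw [hT c hc, pow_zero]
    have h2 : ∏ c ∈ C, ((T c : ℝ) / (∑ c' ∈ C, (T c' : ℝ))) ^ T c = 1 :=
      Finset.prod_eq_one fun c hc => by rw [hT c hc, pow_zero]
    rw [hN, pow_zero, one_mul, h1, h2]
  · have hcast : ((∑ c ∈ C, T c : ℕ) : ℝ) = ∑ c' ∈ C, (T c' : ℝ) := by push_cast; ring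
    set Nr : ℝ := ∑ c' ∈ C, (T c' : ℝ) with hNrdef
    have hNpos : (0:ℝ) < Nr := by
      rw [← hcast]
      exact_mod_cast Nat.pos_of_ne_zero hN
    set w : V → ℝ := fun c => (T c : ℝ) / Nr with hwdef
    set z : V → ℝ := fun c => q c * Nr / (s * (T c : ℝ)) with hzdef
    have hwnn : ∀ c, 0 ≤ w c := fun c => div_nonneg (Nat.cast_nonneg _) hNpos.le
    have hznn : ∀ c, 0 ≤ z c :=
      fun c => div_nonneg (mul_nonneg (hq c) hNpos.le) (mul_nonneg hs.le (Nat.cast_nonneg _))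
    have hw1 : ∑ c ∈ C, w c = 1 := by
      rw [hwdef, ← Finset.sum_div]
      exact div_self hNpos.ne'
    have key := Real.geom_mean_le_arith_mean_weighted C w z (fun c _ => hwnn c) hw1
      (fun c _ => hznn c)
    have hsum' : ∑ c ∈ C, w c * z c ≤ 1 := by
      have heq : ∑ c ∈ C.filter (fun c => T c ≠ 0), w c * z c = ∑ c ∈ C, w c * z c := by
        apply Finset.sum_filter_of_ne
        intro c _ hne
        intro hTc
        apply hne
        rw [hwdef]; simp [hTc]
      rw [← heq]
      have : ∀ c ∈ C.filter (fun c => T c ≠ 0), w c * z c = q c / s := by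
        intro c hc
        rw [Finset.mem_filter] at hc
        have hT : (T c : ℝ) ≠ 0 := Nat.cast_ne_zero.2 hc.2
        rw [hwdef, hzdef]
        field_simp
      rw [Finset.sum_congr rfl this, ← Finset.sum_div]
      exact div_le_one_of_le₀ hsum (by positivity)
    have hA1 : ∏ c ∈ C, z c ^ T c ≤ 1 := by
      have h0 : (0:ℝ) ≤ ∏ c ∈ C, z c ^ w c :=
        Finset.prod_nonneg fun c _ => Real.rpow_nonneg (hznn c) _
      have hle1 : (∏ c ∈ C, z c ^ w c) ^ (∑ c ∈ C, T c) ≤ 1 :=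
        pow_le_one₀ h0 (key.trans hsum')
      calc ∏ c ∈ C, z c ^ T c = (∏ c ∈ C, z c ^ w c) ^ (∑ c ∈ C, T c) := by
            rw [← Finset.prod_pow]
            refine Finset.prod_congr rfl fun c hc => ?_
            rw [← Real.rpow_natCast (z c ^ w c) (∑ c ∈ C, T c),
                ← Real.rpow_natCast (z c) (T c), ← Real.rpow_mul (hznn c)]
            congr 1
            rw [hcast, hwdef]
            field_simp
        _ ≤ 1 := hle1
    have hfac : ∀ c ∈ C, q c ^ T c = z c ^ T c * (s * w c) ^ T c := by
      intro c hc
      rcases Nat.eq_zero_or_pos (T c) with h | h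
      · simp [h]
      · rw [← mul_pow]
        congr 1
        have hT : (T c : ℝ) ≠ 0 := Nat.cast_ne_zero.2 h.ne'
        rw [hzdef, hwdef]
        field_simp
    calc ∏ c ∈ C, q c ^ T c = (∏ c ∈ C, z c ^ T c) * ∏ c ∈ C, (s * w c) ^ T c := by
          rw [← Finset.prod_mul_distrib]
          exact Finset.prod_congr rfl hfac
      _ ≤ 1 * ∏ c ∈ C, (s * w c) ^ T c :=
          mul_le_mul_of_nonneg_right hA1
            (Finset.prod_nonneg fun c _ => pow_nonneg (mul_nonneg hs.le (hwnn c)) _)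
      _ = s ^ (∑ c ∈ C, T c) * ∏ c ∈ C, w c ^ T c := by
          rw [one_mul]
          simp only [mul_pow, Finset.prod_mul_distrib, Finset.prod_pow_eq_pow_sum]
      _ = s ^ (∑ c ∈ C, T c) * ∏ c ∈ C, ((T c : ℝ) / Nr) ^ T c := rfl

/-- Let `π = r 0 ⋯ r n` be a closed finite trace with unique
bottom SCC `B` of its trace graph, and let `p_min ∈ (0,1)`. If `M` is a
finite-state Markov chain whose positive transition probabilities are at least
`p_min`, and `B` is not closed under the transitions of `M`, then
`L(M, π) ≤ (1 - p_min) ^ m_π · L(M_π, π)`, where `m_π = min_{a ∈ B} #_π(a)`. -/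
theorem lik_le_escape_bound {U : Type*} [DecidableEq U] (r : ℕ → U) (n : ℕ)
    (hclosed : ∃ i < n, r i = r n)
    (B : Set U)
    (hBsub : ∀ a ∈ B, ∃ i ≤ n, r i = a)
    (hBne : B.Nonempty)
    (hBconn : ∀ a ∈ B, ∀ b ∈ B, traceReach r n a b)
    (hBbot : ∀ a ∈ B, ∀ b, traceEdge r n a b → b ∈ B)
    (hBfull : ∀ a ∈ B, ∀ b, traceReach r n a b → traceReach r n b a → b ∈ B)
    (pmin : ℝ) (hpmin0 : 0 < pmin) (hpmin1 : pmin < 1)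
    (M : FinMC U) (hMp : ∀ a b, 0 < M.P a b → pmin ≤ M.P a b)
    (hesc : ∃ rB ∈ B, ∃ rbar, rbar ∉ B ∧ 0 < M.P rB rbar) :
    M.lik r n ≤ (1 - pmin) ^ sInf (traceCount r n '' B) * traceLik r n := by
  obtain ⟨rB, hrB, rbar, hrbarB, hrbarP⟩ := hesc
  have hrBS : rB ∈ traceStates r n := by
    obtain ⟨i, hi, hri⟩ := hBsub rB hrB
    rw [← hri]; exact mem_traceStates r hi
  have hColB : ∀ b ∈ (traceStates r n).filter (fun b => traceT r n rB b ≠ 0), b ∈ B := by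
    intro b hb
    rw [Finset.mem_filter] at hb
    obtain ⟨i, hi⟩ := Finset.card_ne_zero.1 hb.2
    rw [Finset.mem_filter, Finset.mem_range] at hi
    exact hBbot rB hrB b ⟨i, hi.1, hi.2⟩
  -- generic row bound
  have hgen : ∀ a ∈ (traceStates r n).erase rB,
      (∏ b ∈ traceStates r n, M.P a b ^ traceT r n a b) ≤
        ∏ b ∈ traceStates r n, traceP r n a b ^ traceT r n a b := by
    intro a _
    have hsum : ∑ b ∈ (traceStates r n).filter (fun b => traceT r n a b ≠ 0), M.P a b ≤ 1 := by
      calc ∑ b ∈ (traceStates r n).filter (fun b => traceT r n a b ≠ 0), M.P a b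
          ≤ ∑ b ∈ traceStates r n, M.P a b :=
            Finset.sum_le_sum_of_subset_of_nonneg (Finset.filter_subset _ _)
              (fun b _ _ => M.P_nonneg a b)
        _ ≤ 1 := rowP_le_one M a _
    have h := gibbs_row (traceStates r n) (traceT r n a) (M.P a) (M.P_nonneg a) 1
      one_pos hsum
    rw [one_pow, one_mul] at h
    simp only [traceP]
    exact h
  -- special row bound
  have hspec : (∏ b ∈ traceStates r n, M.P rB b ^ traceT r n rB b) ≤
      (1 - pmin) ^ traceCount r n rB *
        ∏ b ∈ traceStates r n, traceP r n rB b ^ traceT r n rB b := by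
    have hs0 : (0:ℝ) < 1 - pmin := by linarith
    have hnotmem : rbar ∉ (traceStates r n).filter (fun b => traceT r n rB b ≠ 0) :=
      fun h => hrbarB (hColB rbar h)
    have hsum : ∑ b ∈ (traceStates r n).filter (fun b => traceT r n rB b ≠ 0), M.P rB b
        ≤ 1 - pmin := by
      have h2 : ∑ b ∈ insert rbar ((traceStates r n).filter (fun b => traceT r n rB b ≠ 0)),
          M.P rB b ≤ 1 := rowP_le_one M rB _
      rw [Finset.sum_insert hnotmem] at h2
      have h3 : pmin ≤ M.P rB rbar := hMp _ _ hrbarP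
      linarith
    have h := gibbs_row (traceStates r n) (traceT r n rB) (M.P rB) (M.P_nonneg rB)
      (1 - pmin) hs0 hsum
    rw [traceT_rowsum] at h
    simp only [traceP]
    exact h
  -- nonnegativity facts
  have hQ'nn : ∀ a, (0:ℝ) ≤ ∏ b ∈ traceStates r n, M.P a b ^ traceT r n a b :=
    fun a => Finset.prod_nonneg fun b _ => pow_nonneg (M.P_nonneg a b) _
  have hQnn : ∀ a, (0:ℝ) ≤ ∏ b ∈ traceStates r n, traceP r n a b ^ traceT r n a b :=
    fun a => Finset.prod_nonneg fun b _ => pow_nonneg (traceP_nonneg r n a b) _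
  have e1 : ∏ a ∈ (traceStates r n).erase rB, ∏ b ∈ traceStates r n, M.P a b ^ traceT r n a b
      ≤ ∏ a ∈ (traceStates r n).erase rB, ∏ b ∈ traceStates r n,
          traceP r n a b ^ traceT r n a b :=
    Finset.prod_le_prod (fun a _ => hQ'nn a) hgen
  have hm : sInf (traceCount r n '' B) ≤ traceCount r n rB := Nat.sInf_le ⟨rB, hrB, rfl⟩
  have hpow : (1 - pmin) ^ traceCount r n rB ≤ (1 - pmin) ^ sInf (traceCount r n '' B) :=
    pow_le_pow_of_le_one (by linarith) (by linarith) hm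
  have hM : M.lik r n = M.μ (r 0) *
      ∏ a ∈ traceStates r n, ∏ b ∈ traceStates r n, M.P a b ^ traceT r n a b := by
    rw [FinMC.lik, prod_trace_group]
  have hL : traceLik r n =
      ∏ a ∈ traceStates r n, ∏ b ∈ traceStates r n, traceP r n a b ^ traceT r n a b := by
    rw [traceLik, prod_trace_group]
  rw [hM, hL,
    ← Finset.mul_prod_erase (traceStates r n)
      (fun a => ∏ b ∈ traceStates r n, M.P a b ^ traceT r n a b) hrBS,
    ← Finset.mul_prod_erase (traceStates r n)
      (fun a => ∏ b ∈ traceStates r n, traceP r n a b ^ traceT r n a b) hrBS]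
  have hstep : M.μ (r 0) *
      ((∏ b ∈ traceStates r n, M.P rB b ^ traceT r n rB b) *
        ∏ a ∈ (traceStates r n).erase rB, ∏ b ∈ traceStates r n, M.P a b ^ traceT r n a b)
      ≤ 1 * (((1 - pmin) ^ traceCount r n rB *
          ∏ b ∈ traceStates r n, traceP r n rB b ^ traceT r n rB b) *
        ∏ a ∈ (traceStates r n).erase rB, ∏ b ∈ traceStates r n,
          traceP r n a b ^ traceT r n a b) := by
    apply mul_le_mul (mu_le_one M _) _ _ zero_le_one
    · exact mul_le_mul hspec e1
        (Finset.prod_nonneg fun a _ => hQ'nn a)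
        (mul_nonneg (pow_nonneg (by linarith) _) (hQnn rB))
    · exact mul_nonneg (hQ'nn rB) (Finset.prod_nonneg fun a _ => hQ'nn a)
  refine hstep.trans ?_
  have hrhs_nn : (0:ℝ) ≤ (∏ b ∈ traceStates r n, traceP r n rB b ^ traceT r n rB b) *
      ∏ a ∈ (traceStates r n).erase rB, ∏ b ∈ traceStates r n,
        traceP r n a b ^ traceT r n a b :=
    mul_nonneg (hQnn rB) (Finset.prod_nonneg fun a _ => hQnn a)
  calc 1 * (((1 - pmin) ^ traceCount r n rB *
        ∏ b ∈ traceStates r n, traceP r n rB b ^ traceT r n rB b) *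
      ∏ a ∈ (traceStates r n).erase rB, ∏ b ∈ traceStates r n,
        traceP r n a b ^ traceT r n a b)
      = (1 - pmin) ^ traceCount r n rB *
        ((∏ b ∈ traceStates r n, traceP r n rB b ^ traceT r n rB b) *
          ∏ a ∈ (traceStates r n).erase rB, ∏ b ∈ traceStates r n,
            traceP r n a b ^ traceT r n a b) := by ring
    _ ≤ (1 - pmin) ^ sInf (traceCount r n '' B) *
        ((∏ b ∈ traceStates r n, traceP r n rB b ^ traceT r n rB b) *
          ∏ a ∈ (traceStates r n).erase rB, ∏ b ∈ traceStates r n,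
            traceP r n a b ^ traceT r n a b) :=
      mul_le_mul_of_nonneg_right hpow hrhs_nn
end

section
/- Let M = (S,P,μ) be a finite-state Markov chain over U and let r̂, r̄ ∈ S with 0 < P(r̂,r̄) < 1. Define M' = (S,P',μ) by P'(r̂,r̄) := 0, P'(r̂,s) := P(r̂,s)/(1 − P(r̂,r̄)) for s ∈ S with s ≠ r̄, and P'(r,s) := P(r,s) for r ≠ r̂. Then M' is a finite-state Markov chain over U, and for every finite trace π = r_0 ⋯ r_n that contains no index i ≤ n−1 with (r_i,r_{i+1}) = (r̂,r̄), it holds that L(M',π) · (1 − P(r̂,r̄))^{#_π(r̂)} = L(M,π), where #_π(r̂) is the number of occurrences of r̂ among r_0,…,r_{n−1}. -/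
open Finset

/-- Let `M = (S, P, μ)` be a finite-state Markov chain and
`rhat, rbar ∈ S` with `0 < P(rhat, rbar) < 1`. Removing the transition
`(rhat, rbar)` and rescaling the remaining transitions out of `rhat` by
`1 / (1 - P(rhat, rbar))` yields a finite-state Markov chain `M'` (with the
same states and initial distribution) such that for every finite trace `π`
that never takes the transition `(rhat, rbar)`,
`L(M', π) · (1 - P(rhat, rbar)) ^ #_π(rhat) = L(M, π)`. -/
theorem remove_transition_lik {U : Type*} [DecidableEq U] (M : FinMC U)
    (rhat rbar : U) (hrhat : rhat ∈ M.S) (hrbar : rbar ∈ M.S)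
    (hpos : 0 < M.P rhat rbar) (hlt : M.P rhat rbar < 1)
    (P' : U → U → ℝ)
    (hP' : P' = fun a b =>
      if a = rhat then
        (if b = rbar then 0 else M.P a b / (1 - M.P rhat rbar))
      else M.P a b) :
    ∃ M' : FinMC U, M'.S = M.S ∧ M'.P = P' ∧ M'.μ = M.μ ∧
      ∀ (r : ℕ → U) (n : ℕ), (∀ i < n, ¬(r i = rhat ∧ r (i + 1) = rbar)) →
        M'.lik r n * (1 - M.P rhat rbar) ^ traceCount r n rhat = M.lik r n := by

  have hq : (0:ℝ) < 1 - M.P rhat rbar := by linarith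
  have hle : ∀ b, b ≠ rbar → M.P rhat b ≤ 1 - M.P rhat rbar := by
    intro b hbr
    by_cases hb : b ∈ M.S
    · have hrow := M.P_row rhat hrhat
      have : M.P rhat b + M.P rhat rbar ≤ ∑ c ∈ M.S, M.P rhat c := by
        have := Finset.sum_le_sum_of_subset_of_nonneg
          (show {b, rbar} ⊆ M.S by
            intro x hx; simp at hx; rcases hx with h|h <;> subst h <;> assumption)
          (fun x _ _ => M.P_nonneg rhat x)
        rwa [Finset.sum_pair hbr] at this
      linarith
    · rw [M.P_zero rhat b (Or.inr hb)]; linarith [M.P_nonneg rhat rbar]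
  have hP'nonneg : ∀ a b, 0 ≤ P' a b := by
    intro a b; rw [hP']; dsimp only
    split_ifs with h1 h2
    · exact le_refl 0
    · exact div_nonneg (M.P_nonneg a b) hq.le
    · exact M.P_nonneg a b
  refine ⟨⟨M.S, M.S_ne, P', hP'nonneg, ?_, ?_, ?_, M.μ, M.μ_nonneg, M.μ_zero, M.μ_sum⟩,
    rfl, rfl, rfl, ?_⟩
  · intro a b; rw [hP']; dsimp only
    split_ifs with h1 h2
    · exact zero_le_one
    · subst h1; rw [div_le_one hq]; exact hle b h2
    · exact M.P_le_one a b
  · intro a b hab; rw [hP']; dsimp only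
    split_ifs with h1 h2
    · rfl
    · rw [M.P_zero a b hab, zero_div]
    · exact M.P_zero a b hab
  · intro a ha; rw [hP']; dsimp only
    by_cases h1 : a = rhat
    · rw [h1]
      simp only [if_pos rfl, if_true]
      have hA : ∑ b ∈ M.S, (if b = rbar then (0:ℝ) else M.P rhat b)
          = 1 - M.P rhat rbar := by
        rw [← Finset.sum_erase_add M.S _ hrbar, if_pos rfl, add_zero]
        have h2 := Finset.sum_erase_add M.S (M.P rhat) hrbar
        have hrow := M.P_row rhat hrhat
        calc ∑ b ∈ M.S.erase rbar, (if b = rbar then (0:ℝ) else M.P rhat b)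
            = ∑ b ∈ M.S.erase rbar, M.P rhat b :=
              Finset.sum_congr rfl (fun b hb => if_neg (Finset.ne_of_mem_erase hb))
          _ = 1 - M.P rhat rbar := by linarith
      have hB : ∀ b, (if b = rbar then (0:ℝ) else M.P rhat b / (1 - M.P rhat rbar))
          = (if b = rbar then (0:ℝ) else M.P rhat b) / (1 - M.P rhat rbar) := by
        intro b; split_ifs with h
        · rw [zero_div]
        · rfl
      rw [Finset.sum_congr rfl (fun b _ => hB b), ← Finset.sum_div, hA,
        div_self hq.ne']
    · simp only [if_neg h1]; exact M.P_row a ha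
  · intro r n hno
    simp only [FinMC.lik]
    have hpow : (1 - M.P rhat rbar) ^ traceCount r n rhat
        = ∏ i ∈ Finset.range n, (if r i = rhat then (1 - M.P rhat rbar) else 1) := by
      rw [traceCount, ← Finset.prod_const, Finset.prod_filter]
    rw [mul_assoc, hpow, ← Finset.prod_mul_distrib]
    congr 1
    apply Finset.prod_congr rfl
    intro i hi
    rw [hP']; dsimp only
    by_cases h1 : r i = rhat
    · have hne : r (i + 1) ≠ rbar := fun hc => hno i (Finset.mem_range.mp hi) ⟨h1, hc⟩
      rw [if_pos h1, if_pos h1, if_neg hne, h1, div_mul_cancel₀ _ hq.ne']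
    · rw [if_neg h1, if_neg h1, mul_one]
end
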